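/- arXiv:2305.08617 — 8 statements merged into one kernel-verified Lean document; each statement's English description precedes it below -/
import Mathlib

section
/- Let X = Q⟨c⟩ where Q = ⟨a,b⟩ ≅ Q_{4n} is a generalized quaternion group (n ≥ 2) and ⟨c⟩ is cyclic with Q ∩ ⟨c⟩ = 1. If Q ∩ Q^c ≠ 1, i.e. Q meets its conjugate by c nontrivially, then X has a nontrivial normal subgroup contained in ⟨a⟩. (Key step: any subgroup of prime order of Q ∩ Q^c lies in ⟨a⟩ and is normalized by c.) -/
/-!
Every element of `Q = ⟨a, b⟩` outside `⟨a⟩` has the form `b * a ^ i` and squares to the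
involution `a ^ n`, so it has order `4`. Hence every element of prime order of `Q` lies in the
cyclic group `⟨a⟩`, where the subgroup it generates is determined by its order. Pick `z` of prime
order in `Q ∩ Q^c`. Conjugating `z` by an element of `Q`, or by `c⁻¹`, gives an element of `Q` of
the same prime order, so both `Q` and `c` normalize `⟨z⟩`; since `X = Q⟨c⟩`, `⟨z⟩` is normal.
-/

open Subgroup

section Cyclic

variable {G : Type*} [Group G] {a x y : G}

theorem zpowers_eq_zpowers_pow_div_orderOf (ha : IsOfFinOrder a) (hx : x ∈ zpowers a) :
    zpowers x = zpowers (a ^ (orderOf a / orderOf x)) := by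
  obtain ⟨m, rfl : a ^ m = x⟩ := ha.mem_powers_iff_mem_zpowers.mpr hx
  set d := Nat.gcd (orderOf a) m
  have hd : d ∣ orderOf a := Nat.gcd_dvd_left _ _
  obtain ⟨k, hk⟩ : d ∣ m := Nat.gcd_dvd_right _ _
  rw [ha.orderOf_pow, Nat.div_div_self hd ha.orderOf_pos.ne']
  have : Finite (zpowers (a ^ d)) := ha.pow.finite_zpowers.to_subtype
  refine eq_of_le_of_card_ge ?_ ?_
  · rw [zpowers_le, show a ^ m = (a ^ d) ^ k by rw [← pow_mul, ← hk]]
    exact npow_mem_zpowers _ _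
  · rw [Nat.card_zpowers, Nat.card_zpowers, ha.orderOf_pow, ha.orderOf_pow, Nat.gcd_eq_right hd]

theorem zpowers_eq_zpowers_of_orderOf_eq (ha : IsOfFinOrder a) (hx : x ∈ zpowers a)
    (hy : y ∈ zpowers a) (h : orderOf x = orderOf y) : zpowers x = zpowers y := by
  rw [zpowers_eq_zpowers_pow_div_orderOf ha hx, zpowers_eq_zpowers_pow_div_orderOf ha hy, h]

end Cyclic

theorem Subgroup.mem_normalizer_zpowers_iff {G : Type*} [Group G] {g x : G} :
    g ∈ normalizer (zpowers x : Set G) ↔ zpowers (g * x * g⁻¹) = zpowers x := by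
  rw [mem_normalizer_iff_map_conj_eq, MonoidHom.map_zpowers]
  rfl

theorem Subgroup.exists_prime_orderOf_mem {G : Type*} [Group G] [Finite G] {H : Subgroup G}
    (hH : H ≠ ⊥) : ∃ x ∈ H, (orderOf x).Prime := by
  obtain ⟨p, hp, hpH⟩ := Nat.exists_prime_and_dvd (H.one_lt_card_iff_ne_bot.mpr hH).ne'
  have := Fact.mk hp
  obtain ⟨x, hx⟩ := exists_prime_orderOf_dvd_card' (G := H) p hpH
  exact ⟨x, x.2, by rwa [orderOf_coe, hx]⟩

section Quaternion

variable {G : Type*} [Group G] {a b x : G} {n : ℕ}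

theorem zpow_mul_eq_mul_zpow_neg (hrel : b * a * b⁻¹ = a⁻¹) (i : ℤ) :
    a ^ i * b = b * a ^ (-i) := by
  have hconj : b * a ^ (-i) * b⁻¹ = a ^ i := by rw [← conj_zpow, hrel, inv_zpow', neg_neg]
  rw [← hconj]
  group

theorem mem_zpowers_or_exists_eq_mul_zpow (hb2 : b ^ 2 = a ^ n) (hrel : b * a * b⁻¹ = a⁻¹)
    (hx : x ∈ closure {a, b}) : x ∈ zpowers a ∨ ∃ i : ℤ, x = b * a ^ i := by
  have hab : a * b = b * a⁻¹ := by simpa using zpow_mul_eq_mul_zpow_neg hrel 1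
  have hab' : a⁻¹ * b = b * a := by simpa using zpow_mul_eq_mul_zpow_neg hrel (-1)
  have han : a ^ n ∈ zpowers a := npow_mem_zpowers a n
  induction hx using closure_induction_left with
  | one => exact .inl (one_mem _)
  | mul_left g hg y _ ih =>
    rcases hg with hg | hg <;> subst g <;> rcases ih with hy | ⟨j, rfl⟩
    · exact .inl (mul_mem (mem_zpowers a) hy)
    · exact .inr ⟨-1 + j, by rw [← mul_assoc, hab]; group⟩
    · obtain ⟨j, rfl⟩ := mem_zpowers_iff.mp hy
      exact .inr ⟨j, rfl⟩
    · exact .inl (by rw [← mul_assoc, ← sq, hb2]; exact mul_mem han (zpow_mem_zpowers a j))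
  | inv_mul_cancel g hg y _ ih =>
    rcases hg with hg | hg <;> subst g <;> rcases ih with hy | ⟨j, rfl⟩
    · exact .inl (mul_mem (inv_mem (mem_zpowers a)) hy)
    · exact .inr ⟨1 + j, by rw [← mul_assoc, hab']; group⟩
    · obtain ⟨j, rfl⟩ := mem_zpowers_iff.mp hy
      refine .inr ⟨-n + j, ?_⟩
      rw [show b⁻¹ = b * (b ^ 2)⁻¹ by group, hb2]
      group
    · exact .inl (by rw [inv_mul_cancel_left]; exact zpow_mem_zpowers a j)

theorem mul_zpow_sq (hb2 : b ^ 2 = a ^ n) (hrel : b * a * b⁻¹ = a⁻¹) (i : ℤ) :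
    (b * a ^ i) ^ 2 = a ^ n := by
  calc (b * a ^ i) ^ 2 = b * (a ^ i * b) * a ^ i := by simp only [sq, mul_assoc]
    _ = b ^ 2 := by rw [zpow_mul_eq_mul_zpow_neg hrel]; simp [sq, mul_assoc]
    _ = a ^ n := hb2

theorem orderOf_mul_zpow (hb2 : b ^ 2 = a ^ n) (hrel : b * a * b⁻¹ = a⁻¹)
    (hinv : orderOf (a ^ n) = 2) (i : ℤ) : orderOf (b * a ^ i) = 4 := by
  have hsq := mul_zpow_sq hb2 hrel i
  refine orderOf_eq_prime_pow (p := 2) (n := 1) ?_ ?_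
  · rw [pow_one, hsq, ← orderOf_eq_one_iff, hinv]
    decide
  · rw [pow_succ, pow_one, pow_mul, hsq, ← hinv, pow_orderOf_eq_one]

theorem mem_zpowers_of_prime_orderOf (hb2 : b ^ 2 = a ^ n) (hrel : b * a * b⁻¹ = a⁻¹)
    (hinv : orderOf (a ^ n) = 2) (hx : x ∈ closure {a, b}) (hp : (orderOf x).Prime) :
    x ∈ zpowers a := by
  refine (mem_zpowers_or_exists_eq_mul_zpow hb2 hrel hx).resolve_right ?_
  rintro ⟨i, rfl⟩
  rw [orderOf_mul_zpow hb2 hrel hinv] at hp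
  norm_num at hp

end Quaternion

theorem exists_normal_le_zpowers_a_general {X : Type*} [Group X] [Finite X]
    (n : ℕ) (a b c : X)
    (Q : Subgroup X) (hQgen : Q = Subgroup.closure {a, b})
    (hoa : orderOf a = 2 * n) (hb2 : b ^ 2 = a ^ n)
    (hrel : b * a * b⁻¹ = a⁻¹)
    (hfact : ∀ x : X, ∃ g ∈ Q, ∃ k : ℤ, x = g * c ^ k)
    (hmeet : Q ⊓ Q.map (MulAut.conj c).toMonoidHom ≠ ⊥) :
    ∃ N : Subgroup X, N.Normal ∧ N ≤ Subgroup.zpowers a ∧ N ≠ ⊥ := by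
  have hinv : orderOf (a ^ n) = 2 := by
    have := orderOf_pow_orderOf_div (orderOf_pos a).ne' (hoa ▸ dvd_mul_right 2 n)
    rwa [hoa, Nat.mul_div_cancel_left n two_pos] at this
  have hQA : ∀ x ∈ Q, (orderOf x).Prime → x ∈ zpowers a := fun x hx =>
    mem_zpowers_of_prime_orderOf hb2 hrel hinv (hQgen ▸ hx)
  obtain ⟨z, ⟨hzQ, y, hyQ, hyz⟩, hz⟩ := exists_prime_orderOf_mem hmeet
  simp only [MulEquiv.coe_toMonoidHom, MulAut.conj_apply] at hyz
  have hunique : ∀ x ∈ Q, orderOf x = orderOf z → zpowers x = zpowers z := fun x hx hxz =>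
    zpowers_eq_zpowers_of_orderOf_eq (isOfFinOrder_of_finite a) (hQA x hx (hxz ▸ hz))
      (hQA z hzQ hz) hxz
  have hQnorm : Q ≤ normalizer (zpowers z : Set X) := fun g hg =>
    mem_normalizer_zpowers_iff.mpr <| hunique _ (mul_mem (mul_mem hg hzQ) (inv_mem hg))
      ((SemiconjBy.conj_mk g z).orderOf_eq g).symm
  have hcnorm : c⁻¹ ∈ normalizer (zpowers z : Set X) := by
    have hzy : c⁻¹ * z * c⁻¹⁻¹ = y := by rw [← hyz]; group
    rw [mem_normalizer_zpowers_iff, hzy]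
    exact hunique y hyQ (hyz ▸ (SemiconjBy.conj_mk c y).orderOf_eq c)
  refine ⟨zpowers z, ?_, zpowers_le.mpr (hQA z hzQ hz), ?_⟩
  · rw [← normalizer_eq_top_iff, eq_top_iff']
    intro x
    obtain ⟨g, hg, k, rfl⟩ := hfact x
    exact mul_mem (hQnorm hg) (zpow_mem (inv_mem_iff.mp hcnorm) k)
  · exact zpowers_ne_bot.mpr (by rintro rfl; norm_num at hz)

/-- If `X = Q⟨c⟩` with `Q` generalized quaternion and `Q ∩ Q^c ≠ 1`, then `X` has a
nontrivial normal subgroup contained in `⟨a⟩`. -/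
theorem exists_normal_le_zpowers_a {X : Type*} [Group X] [Finite X]
    (n : ℕ) (hn : 2 ≤ n) (a b c : X)
    (Q : Subgroup X) (hQgen : Q = Subgroup.closure {a, b})
    (hoa : orderOf a = 2 * n) (hb2 : b ^ 2 = a ^ n)
    (hrel : b * a * b⁻¹ = a⁻¹) (hcardQ : Nat.card Q = 4 * n)
    (hint : Q ⊓ Subgroup.zpowers c = ⊥)
    (hfact : ∀ x : X, ∃ g ∈ Q, ∃ k : ℤ, x = g * c ^ k)
    (hmeet : Q ⊓ Q.map (MulAut.conj c).toMonoidHom ≠ ⊥) :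
    ∃ N : Subgroup X, N.Normal ∧ N ≤ Subgroup.zpowers a ∧ N ≠ ⊥ :=
  exists_normal_le_zpowers_a_general n a b c Q hQgen hoa hb2 hrel hfact hmeet
end

section
/- Let X be a finite solvable group with a faithful 2-transitive action on a set Ω of composite cardinality, and suppose some point stabilizer is cyclic and core-free while X contains a regular dihedral subgroup D. Then X ≅ A_4 (and D ≅ Z_2 × Z_2). -/
/-! The last nontrivial term `N` of the derived series of `X` is an abelian normal subgroup, hence
transitive (a 2-transitive action is primitive) and therefore regular. By 2-transitivity the point
stabilizer `X_α` acts transitively by conjugation on `N \ {1}`, and since `X_α` is abelian this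
action is also free. So `|X_α| = |Ω| - 1`, and all nontrivial elements of `N` are conjugate, hence
of the same prime order, which is `2` because `|Ω| = |D|` is even. Thus `N` is a `2`-group of odd
index `|Ω| - 1`, a normal Sylow subgroup, and the regular subgroup `D`, of order `|N|`, lies in `N`.
The element `a ∈ D` of order `n` then forces `n = 2`, so `|Ω| = 4`, `|X| = 12`, and `X` embeds in
`S₄` with index `2`, i.e. as `A₄`. -/

open MulAction

section

variable {G Ω : Type*} [Group G] [MulAction G Ω]

theorem Group.IsSolvable.exists_normal_ne_bot_commute [Group.IsSolvable G] [Nontrivial G] :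
    ∃ N : Subgroup G, N.Normal ∧ N ≠ ⊥ ∧ ∀ x ∈ N, ∀ y ∈ N, Commute x y := by
  classical
  have hex : ∃ k, derivedSeries G k = ⊥ := Group.IsSolvable.solvable
  have hk : Nat.find hex ≠ 0 := fun h => top_ne_bot (h ▸ Nat.find_spec hex)
  refine ⟨derivedSeries G (Nat.find hex - 1), derivedSeries_normal _ _,
    Nat.find_min hex (by omega), fun x hx y hy => ?_⟩
  have hcomm : ⁅derivedSeries G (Nat.find hex - 1), derivedSeries G (Nat.find hex - 1)⁆ = ⊥ := by
    rw [← derivedSeries_succ, Nat.sub_add_cancel (Nat.pos_of_ne_zero hk), Nat.find_spec hex]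
  exact Subgroup.mem_centralizer_iff.mp
    (Subgroup.commutator_eq_bot_iff_le_centralizer.mp hcomm hy) x hx

theorem IsPGroup.le_of_normal_of_not_dvd_index {p : ℕ} [Fact p.Prime] {P Q : Subgroup G}
    [P.Normal] (hP : IsPGroup p P) (hindex : ¬ p ∣ P.index) (hQ : IsPGroup p Q) : Q ≤ P :=
  le_sup_right.trans ((hP.toSylow hindex).is_maximal' (hP.to_sup_of_normal_left hQ) le_sup_left).le

theorem IsPreprimitive.isPretransitive_of_normal [IsPreprimitive G Ω] [FaithfulSMul G Ω]
    {N : Subgroup G} [N.Normal] (hN : N ≠ ⊥) : IsPretransitive N Ω := by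
  refine IsQuasiPreprimitive.isPretransitive_of_normal fun hfix => hN ?_
  refine (Subgroup.eq_bot_iff_forall N).mpr fun x hx => eq_of_smul_eq_smul (α := Ω) fun ω => ?_
  simpa using (Set.eq_univ_iff_forall.mp hfix ω) ⟨x, hx⟩

structure Subgroup.IsRegular (H : Subgroup G) (Ω : Type*) [MulAction G Ω] : Prop where
  exists_smul_eq : ∀ ω₁ ω₂ : Ω, ∃ g ∈ H, g • ω₁ = ω₂
  eq_one_of_smul_eq : ∀ g ∈ H, ∀ ω : Ω, g • ω = ω → g = 1

theorem Subgroup.IsRegular.of_commute [FaithfulSMul G Ω] {N : Subgroup G} [IsPretransitive N Ω]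
    (hN : ∀ x ∈ N, ∀ y ∈ N, Commute x y) : N.IsRegular Ω := by
  refine ⟨fun ω₁ ω₂ => ?_, fun x hx ω h => eq_of_smul_eq_smul (α := Ω) fun ω' => ?_⟩
  · obtain ⟨x, hx⟩ := MulAction.exists_smul_eq N ω₁ ω₂
    exact ⟨x, x.2, hx⟩
  obtain ⟨y, rfl⟩ := MulAction.exists_smul_eq N ω ω'
  rw [Subgroup.smul_def, ← mul_smul, (hN x hx y y.2).eq, mul_smul, h, one_smul]

theorem exists_normal_isRegular_of_isSolvable [Group.IsSolvable G] [Nontrivial G]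
    [FaithfulSMul G Ω] [IsMultiplyPretransitive G Ω 2] :
    ∃ N : Subgroup G, N.Normal ∧ N ≠ ⊥ ∧ N.IsRegular Ω := by
  obtain ⟨N, hNormal, hN, hcomm⟩ := Group.IsSolvable.exists_normal_ne_bot_commute (G := G)
  have := isPreprimitive_of_is_two_pretransitive (G := G) (α := Ω) ‹_›
  have := IsPreprimitive.isPretransitive_of_normal (Ω := Ω) hN
  exact ⟨N, hNormal, hN, Subgroup.IsRegular.of_commute hcomm⟩

namespace Subgroup.IsRegular

theorem card_eq [Nonempty Ω] {H : Subgroup G} (hH : H.IsRegular Ω) :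
    Nat.card H = Nat.card Ω := by
  obtain ⟨α⟩ := ‹Nonempty Ω›
  refine Nat.card_eq_of_bijective (fun g : H => (g : G) • α) ⟨fun g h hgh => Subtype.ext ?_,
    fun ω => let ⟨g, hg, hgα⟩ := hH.exists_smul_eq α ω; ⟨⟨g, hg⟩, hgα⟩⟩
  have hfix : ((h : G)⁻¹ * g) • α = α := by
    rw [mul_smul, inv_smul_eq_iff]
    exact hgh
  exact (inv_mul_eq_one.mp (hH.eq_one_of_smul_eq _ (H.mul_mem (H.inv_mem h.2) g.2) α hfix)).symm

variable [IsMultiplyPretransitive G Ω 2] {N : Subgroup G} [N.Normal]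

theorem exists_mem_stabilizer_conj_eq (hN : N.IsRegular Ω) (α : Ω) {x y : G} (hx : x ∈ N)
    (hy : y ∈ N) (hx1 : x ≠ 1) (hy1 : y ≠ 1) : ∃ g ∈ stabilizer G α, g * x * g⁻¹ = y := by
  have hfree := hN.eq_one_of_smul_eq
  obtain ⟨g, hgα, hgx⟩ := (is_two_pretransitive_iff.mp ‹_›)
    (fun h => hx1 (hfree x hx α h.symm)) (fun h => hy1 (hfree y hy α h.symm))
  refine ⟨g, hgα, ?_⟩
  have hgα' : g⁻¹ • α = α := inv_smul_eq_iff.mpr hgα.symm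
  have hfix : (y⁻¹ * (g * x * g⁻¹)) • α = α := by
    rw [mul_smul, mul_smul, mul_smul, hgα', hgx, inv_smul_smul]
  have hmem : y⁻¹ * (g * x * g⁻¹) ∈ N := N.mul_mem (N.inv_mem hy) (‹N.Normal›.conj_mem x hx g)
  exact (inv_mul_eq_one.mp (hfree _ hmem α hfix)).symm

theorem orderOf_eq_of_dvd_card [Nonempty Ω] [Finite G] (hN : N.IsRegular Ω) {p : ℕ}
    [Fact p.Prime] (hp : p ∣ Nat.card N) {x : G} (hx : x ∈ N) (hx1 : x ≠ 1) : orderOf x = p := by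
  obtain ⟨t, ht⟩ := exists_prime_orderOf_dvd_card' p hp
  have ht' : orderOf (t : G) = p := by rw [Subgroup.orderOf_coe, ht]
  have ht1 : (t : G) ≠ 1 := fun h => (Fact.out : p.Prime).ne_one (by rw [← ht', h, orderOf_one])
  obtain ⟨g, -, hg⟩ := hN.exists_mem_stabilizer_conj_eq (Classical.arbitrary Ω) hx t.2 hx1 ht1
  rw [← ht', ← hg]
  exact SemiconjBy.orderOf_eq g (by simp [SemiconjBy, mul_assoc])

theorem isPGroup_of_dvd_card [Nonempty Ω] [Finite G] (hN : N.IsRegular Ω) {p : ℕ}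
    [Fact p.Prime] (hp : p ∣ Nat.card N) : IsPGroup p N :=
  IsPGroup.iff_orderOf.mpr fun x => by
    rcases eq_or_ne x 1 with rfl | hx1
    · exact ⟨0, orderOf_one⟩
    · refine ⟨1, ?_⟩
      rw [pow_one, ← Subgroup.orderOf_coe]
      exact hN.orderOf_eq_of_dvd_card hp x.2 (by simpa using hx1)

variable [FaithfulSMul G Ω]

theorem eq_one_of_mem_stabilizer_of_commute (hN : N.IsRegular Ω) (α : Ω)
    [IsMulCommutative (stabilizer G α)] {g x : G} (hg : g ∈ stabilizer G α) (hx : x ∈ N)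
    (hx1 : x ≠ 1) (hgx : Commute g x) : g = 1 := by
  have hgN : ∀ y ∈ N, Commute g y := by
    intro y hy
    rcases eq_or_ne y 1 with rfl | hy1
    · exact Commute.one_right g
    obtain ⟨h, hh, rfl⟩ := hN.exists_mem_stabilizer_conj_eq α hx hy hx1 hy1
    have hgh : Commute g h := congrArg Subtype.val (mul_comm' (⟨g, hg⟩ : stabilizer G α) ⟨h, hh⟩)
    exact (hgh.mul_right hgx).mul_right hgh.inv_right
  refine eq_of_smul_eq_smul (α := Ω) fun ω => ?_
  obtain ⟨y, hy, rfl⟩ := hN.exists_smul_eq α ω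
  rw [← mul_smul, (hgN y hy).eq, mul_smul, mem_stabilizer_iff.mp hg, one_smul]

theorem card_stabilizer_add_one [Finite G] (hN : N.IsRegular Ω) (hN1 : N ≠ ⊥) (α : Ω)
    [IsMulCommutative (stabilizer G α)] : Nat.card (stabilizer G α) + 1 = Nat.card N := by
  classical
  obtain ⟨x, hx, hx1⟩ := N.bot_or_exists_ne_one.resolve_left hN1
  let conj : stabilizer G α → {y : N // y ≠ 1} := fun g =>
    ⟨⟨g * x * (g : G)⁻¹, ‹N.Normal›.conj_mem x hx g⟩,
      fun h => hx1 (by simpa using congrArg Subtype.val h)⟩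
  have hconj : Function.Bijective conj := by
    refine ⟨fun g h hgh => ?_, fun ⟨y, hy⟩ => ?_⟩
    · have hgh' : (g : G) * x * (g : G)⁻¹ = h * x * (h : G)⁻¹ :=
        congrArg (fun y : {y : N // y ≠ 1} => (y : G)) hgh
      have hcomm : Commute ((h : G)⁻¹ * g) x := calc
        (h : G)⁻¹ * g * x = (h : G)⁻¹ * (g * x * (g : G)⁻¹) * g := by group
        _ = (h : G)⁻¹ * (h * x * (h : G)⁻¹) * g := by rw [hgh']
        _ = x * ((h : G)⁻¹ * g) := by group
      exact Subtype.ext (inv_mul_eq_one.mp (hN.eq_one_of_mem_stabilizer_of_commute α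
        (mul_mem (inv_mem h.2) g.2) hx hx1 hcomm)).symm
    · obtain ⟨g, hg, hgx⟩ := hN.exists_mem_stabilizer_conj_eq α hx y.2 hx1
        (fun h => hy (Subtype.ext h))
      exact ⟨⟨g, hg⟩, Subtype.ext (Subtype.ext hgx)⟩
  rw [Nat.card_eq_of_bijective conj hconj, ← Finite.card_option,
    Nat.card_congr (Equiv.optionSubtypeNe 1)]

theorem card_eq_mul_card_sub_one [Finite G] (hN : N.IsRegular Ω) (hN1 : N ≠ ⊥) (α : Ω)
    [IsMulCommutative (stabilizer G α)] : Nat.card G = Nat.card Ω * (Nat.card Ω - 1) := by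
  have : Nonempty Ω := ⟨α⟩
  have : IsPretransitive G Ω := isPretransitive_of_is_two_pretransitive
  rw [← (stabilizer G α).card_mul_index, index_stabilizer_of_transitive, ← hN.card_eq,
    ← hN.card_stabilizer_add_one hN1 α, Nat.add_sub_cancel, mul_comm]

theorem le_of_isRegular [Finite G] (hN : N.IsRegular Ω) (hN1 : N ≠ ⊥) (α : Ω)
    [IsMulCommutative (stabilizer G α)] {D : Subgroup G} (hD : D.IsRegular Ω)
    (h2 : 2 ∣ Nat.card Ω) : D ≤ N := by
  have : Nonempty Ω := ⟨α⟩
  have : Fact (Nat.Prime 2) := ⟨Nat.prime_two⟩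
  rw [← hN.card_eq] at h2
  have hNp : IsPGroup 2 N := hN.isPGroup_of_dvd_card h2
  obtain ⟨k, hk⟩ := hNp.exists_card_eq
  have hindex : N.index = Nat.card N - 1 := by
    have h := N.card_mul_index
    rw [hN.card_eq_mul_card_sub_one hN1 α, ← hN.card_eq] at h
    exact Nat.eq_of_mul_eq_mul_left Nat.card_pos h
  have hDp : IsPGroup 2 D := IsPGroup.of_card (hD.card_eq.trans (hN.card_eq.symm.trans hk))
  refine IsPGroup.le_of_normal_of_not_dvd_index hNp ?_ hDp
  have := Nat.card_pos (α := N)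
  omega

end Subgroup.IsRegular

theorem nonempty_mulEquiv_alternatingGroup_fin [Finite G] [Finite Ω] [FaithfulSMul G Ω]
    {k : ℕ} (hΩ : Nat.card Ω = k) (hG : 2 * Nat.card G = k.factorial) :
    Nonempty (G ≃* alternatingGroup (Fin k)) := by
  set f : G →* Equiv.Perm (Fin k) :=
    (Equiv.permCongrHom (Finite.equivFinOfCardEq hΩ)).toMonoidHom.comp (toPermHom G Ω)
  have hf : Function.Injective f :=
    (Equiv.permCongrHom (Finite.equivFinOfCardEq hΩ)).injective.comp toPerm_injective
  have hindex : f.range.index = 2 := by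
    have h := f.range.index_mul_card
    rw [← Nat.card_congr (MonoidHom.ofInjective hf).toEquiv, Nat.card_perm, Nat.card_fin,
      ← hG] at h
    exact Nat.eq_of_mul_eq_mul_right Nat.card_pos h
  exact ⟨(MonoidHom.ofInjective hf).trans
    (MulEquiv.subgroupCongr (Equiv.Perm.eq_alternatingGroup_of_index_eq_two hindex))⟩

end

theorem solvable_two_transitive_dihedral_eq_A4_general {X Ω : Type*} [Group X] [Finite X]
    [Finite Ω] [MulAction X Ω] (hsolv : IsSolvable X)
    (hfaithful : ∀ g : X, (∀ ω : Ω, g • ω = ω) → g = 1)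
    (h2trans : ∀ α β γ δ : Ω, α ≠ β → γ ≠ δ → ∃ g : X, g • α = γ ∧ g • β = δ)
    (α : Ω) (hcyc : IsCyclic (MulAction.stabilizer X α))
    (D : Subgroup X) (n : ℕ) (hn : 2 ≤ n) (a b : X)
    (hDgen : D = Subgroup.closure {a, b})
    (hoa : orderOf a = n) (hcardD : Nat.card D = 2 * n)
    (hDtrans : ∀ ω₁ ω₂ : Ω, ∃ g ∈ D, g • ω₁ = ω₂)
    (hDfree : ∀ g ∈ D, ∀ ω : Ω, g • ω = ω → g = 1) :
    Nonempty (X ≃* alternatingGroup (Fin 4)) ∧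
    Nonempty (D ≃* Multiplicative (ZMod 2 × ZMod 2)) := by
  have : FaithfulSMul X Ω :=
    ⟨fun h => mul_inv_eq_one.mp (hfaithful _ fun ω => by rw [mul_smul, h, smul_inv_smul])⟩
  have : IsMultiplyPretransitive X Ω 2 := is_two_pretransitive_iff.mpr (h2trans _ _ _ _)
  have : Group.IsSolvable X := hsolv
  have : Nonempty Ω := ⟨α⟩
  have : Fact (Nat.Prime 2) := ⟨Nat.prime_two⟩
  have hD : D.IsRegular Ω := ⟨hDtrans, hDfree⟩
  have hΩ : Nat.card Ω = 2 * n := hD.card_eq ▸ hcardD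
  have ha : a ∈ D := hDgen ▸ Subgroup.subset_closure (Set.mem_insert a {b})
  have ha1 : a ≠ 1 := by rintro rfl; rw [orderOf_one] at hoa; omega
  have : Nontrivial X := ⟨⟨a, 1, ha1⟩⟩
  obtain ⟨N, hNormal, hN1, hN⟩ := exists_normal_isRegular_of_isSolvable (G := X) (Ω := Ω)
  have hDN : D ≤ N := hN.le_of_isRegular hN1 α hD (hΩ ▸ dvd_mul_right 2 n)
  have horder : ∀ x ∈ D, x ≠ 1 → orderOf x = 2 := fun x hx hx1 =>
    hN.orderOf_eq_of_dvd_card (hN.card_eq ▸ hΩ ▸ dvd_mul_right 2 n) (hDN hx) hx1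
  obtain rfl : n = 2 := hoa.symm.trans (horder a ha ha1)
  refine ⟨nonempty_mulEquiv_alternatingGroup_fin hΩ ?_, ?_⟩
  · rw [hN.card_eq_mul_card_sub_one hN1 α, hΩ]
    rfl
  · have : Nontrivial D := Finite.one_lt_card_iff_nontrivial.mp (by omega)
    have : IsKleinFour D := ⟨hcardD, (Monoid.exponent_eq_prime_iff Nat.prime_two).mpr
      fun g hg => by rw [← Subgroup.orderOf_coe]; exact horder g g.2 (by simpa using hg)⟩
    exact IsKleinFour.nonempty_mulEquiv

/-- A finite solvable faithful 2-transitive group of composite degree with a cyclic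
core-free point stabilizer and a regular dihedral subgroup is `A₄`, and the dihedral
subgroup is the Klein four-group. -/
theorem solvable_two_transitive_dihedral_eq_A4 {X Ω : Type*} [Group X] [Finite X]
    [Finite Ω] [MulAction X Ω] (hsolv : IsSolvable X)
    (hfaithful : ∀ g : X, (∀ ω : Ω, g • ω = ω) → g = 1)
    (h2trans : ∀ α β γ δ : Ω, α ≠ β → γ ≠ δ → ∃ g : X, g • α = γ ∧ g • β = δ)
    (hΩ : 1 < Nat.card Ω) (hnp : ¬ (Nat.card Ω).Prime)
    (α : Ω) (hcyc : IsCyclic (MulAction.stabilizer X α))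
    (hcorefree : (MulAction.stabilizer X α).normalCore = ⊥)
    (D : Subgroup X) (n : ℕ) (hn : 2 ≤ n) (a b : X)
    (hDgen : D = Subgroup.closure {a, b})
    (hoa : orderOf a = n) (hob : orderOf b = 2)
    (hrel : b * a * b⁻¹ = a⁻¹) (hcardD : Nat.card D = 2 * n)
    (hDtrans : ∀ ω₁ ω₂ : Ω, ∃ g ∈ D, g • ω₁ = ω₂)
    (hDfree : ∀ g ∈ D, ∀ ω : Ω, g • ω = ω → g = 1) :
    Nonempty (X ≃* alternatingGroup (Fin 4)) ∧
    Nonempty (D ≃* Multiplicative (ZMod 2 × ZMod 2)) :=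
  solvable_two_transitive_dihedral_eq_A4_general hsolv hfaithful h2trans α hcyc D n hn a b hDgen hoa
    hcardD hDtrans hDfree
end

section
/- For n ≥ 2 and a prime p, the affine group AGL(n, p) contains an element of order p^n if and only if (n, p) = (2, 2); moreover AGL(2,2) ≅ S_4. -/
/-!
An affine map `g x = A x + b` of `V = K^n` acts linearly on `V × K` by `(x, t) ↦ (A x + t b, t)`,
faithfully, so `AGL(n, K)` embeds into `GL(n + 1, K)`. If `g` has `p`-power order then in
characteristic `p` the image `u` satisfies `(u - 1)^(p^m) = u^(p^m) - 1 = 0`, so `u - 1` is a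
nilpotent endomorphism of an `(n + 1)`-dimensional space and `(u - 1)^(n + 1) = 0`. Hence
`u^(p^k) = 1 + (u - 1)^(p^k) = 1` as soon as `n + 1 ≤ p^k`, and for `(n, p) ≠ (2, 2)` already
`n + 1 ≤ p^(n - 1)`, which rules out order `p^n`.

For `n = p = 2` every permutation of the four points of `𝔽₂²` is affine, so `AGL(2, 2) ≅ S₄`,
and a `4`-cycle gives an element of order `4`.
-/

open Module Equiv.Perm

section ExpChar

variable {R : Type*} [Ring R] (p : ℕ) [ExpChar R p]

lemma isNilpotent_sub_one_of_pow_expChar_pow_eq_one {u : R} {m : ℕ} (hu : u ^ p ^ m = 1) :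
    IsNilpotent (u - 1) :=
  ⟨p ^ m, by rw [sub_pow_expChar_pow_of_commute p m (Commute.one_right u), hu, one_pow, sub_self]⟩

lemma pow_expChar_pow_eq_one_of_sub_one_pow_eq_zero {u : R} {d k : ℕ} (hu : (u - 1) ^ d = 0)
    (hk : d ≤ p ^ k) : u ^ p ^ k = 1 := by
  rw [← sub_eq_zero, ← one_pow (p ^ k), ← sub_pow_expChar_pow_of_commute p k (Commute.one_right u)]
  exact pow_eq_zero_of_le hk hu

end ExpChar

lemma IsNilpotent.pow_finrank_eq_zero {R M : Type*} [CommRing R] [IsDomain R] [AddCommGroup M]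
    [Module R M] [Module.Free R M] [Module.Finite R M] {φ : Module.End R M} (h : IsNilpotent φ) :
    φ ^ finrank R M = 0 := by
  simpa [h.charpoly_eq_X_pow_finrank] using φ.aeval_self_charpoly

namespace AffineEquiv

section Linearize

variable {k V : Type*} [Ring k] [AddCommGroup V] [Module k V]

lemma apply_eq_linear_add_apply_zero (g : V ≃ᵃ[k] V) (x : V) : g x = g.linear x + g 0 := by
  simpa using g.map_vadd 0 x

def linearize : (V ≃ᵃ[k] V) →* Module.End k (V × k) where
  toFun g := (g.linear.toLinearMap ∘ₗ LinearMap.fst k V k +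
    (LinearMap.snd k V k).smulRight (g 0)).prod (LinearMap.snd k V k)
  map_one' := by ext <;> simp [one_def]
  map_mul' g h := by
    ext <;> simp [apply_eq_linear_add_apply_zero g (h 0)]
    rfl

@[simp]
lemma linearize_apply (g : V ≃ᵃ[k] V) (x : V) (t : k) :
    linearize g (x, t) = (g.linear x + t • g 0, t) := rfl

lemma linearize_injective : Function.Injective (linearize : (V ≃ᵃ[k] V) → _) := by
  intro g h hgh
  ext x
  simpa [← apply_eq_linear_add_apply_zero] using congr_arg (fun u => (u (x, 1)).1) hgh

end Linearize

lemma pow_expChar_pow_eq_one {K V : Type*} [Field K] [AddCommGroup V] [Module K V]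
    [FiniteDimensional K V] (p : ℕ) [ExpChar K p] {g : V ≃ᵃ[K] V} {m k : ℕ} (hg : g ^ p ^ m = 1)
    (hk : finrank K V < p ^ k) : g ^ p ^ k = 1 := by
  have : ExpChar (Module.End K (V × K)) p :=
    expChar_of_injective_algebraMap (algebraMap K _).injective p
  have hu : linearize g ^ p ^ m = 1 := by rw [← map_pow, hg, map_one]
  have hnil := (isNilpotent_sub_one_of_pow_expChar_pow_eq_one p hu).pow_finrank_eq_zero
  apply linearize_injective
  rw [map_pow, map_one]
  refine pow_expChar_pow_eq_one_of_sub_one_pow_eq_zero p hnil ?_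
  rw [finrank_prod, finrank_self]
  exact hk

section ToPerm

variable {k P V : Type*} [Ring k] [AddCommGroup V] [Module k V] [AddTorsor V P]

def toPermHom : (P ≃ᵃ[k] P) →* Equiv.Perm P where
  toFun := AffineEquiv.toEquiv
  map_one' := rfl
  map_mul' _ _ := rfl

lemma toPermHom_injective : Function.Injective (toPermHom : (P ≃ᵃ[k] P) → _) :=
  AffineEquiv.toEquiv_injective

end ToPerm

end AffineEquiv

def AffineMap.ofZModMapAdd {n : ℕ} {V W : Type*} [AddCommGroup V] [Module (ZMod n) V]
    [AddCommGroup W] [Module (ZMod n) W] (f : V → W) (hf : ∀ x y, f (x + y) = f x + f y - f 0) :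
    V →ᵃ[ZMod n] W where
  toFun := f
  linear := AddMonoidHom.toZModLinearMap n
    { toFun x := f x - f 0
      map_zero' := sub_self _
      map_add' x y := by rw [hf]; abel }
  map_vadd' x v := by simp [hf, sub_add_eq_add_sub]

/- Either two of `0, x, y, x + y` coincide, or they are the four points of `𝔽₂²`, whose images
under `σ` again sum to `0`. -/
lemma Equiv.Perm.map_add_zmod_two_sq (σ : Equiv.Perm (Fin 2 → ZMod 2)) (x y : Fin 2 → ZMod 2) :
    σ (x + y) = σ x + σ y - σ 0 := by
  revert σ x y
  decide

lemma AffineEquiv.toPermHom_surjective_zmod_two_sq :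
    Function.Surjective
      (toPermHom : ((Fin 2 → ZMod 2) ≃ᵃ[ZMod 2] (Fin 2 → ZMod 2)) → _) := fun σ =>
  ⟨.ofBijective (φ := .ofZModMapAdd σ σ.map_add_zmod_two_sq) σ.bijective, Equiv.ext fun _ => rfl⟩

noncomputable def affineEquivZModTwoSqMulEquivPermFinFour :
    ((Fin 2 → ZMod 2) ≃ᵃ[ZMod 2] (Fin 2 → ZMod 2)) ≃* Equiv.Perm (Fin 4) :=
  (MulEquiv.ofBijective _ ⟨AffineEquiv.toPermHom_injective,
    AffineEquiv.toPermHom_surjective_zmod_two_sq⟩).trans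
    (Fintype.equivFinOfCardEq (by simp)).permCongrHom

lemma exists_affineEquiv_zmod_two_sq_orderOf_eq_four :
    ∃ g : (Fin 2 → ZMod 2) ≃ᵃ[ZMod 2] (Fin 2 → ZMod 2), orderOf g = 4 :=
  ⟨affineEquivZModTwoSqMulEquivPermFinFour.symm (finRotate 4), by
    rw [MulEquiv.orderOf_eq, (isCycle_finRotate (n := 2)).orderOf, support_finRotate]; rfl⟩

lemma Nat.succ_le_prime_pow_pred {n p : ℕ} (hn : 2 ≤ n) (hp : p.Prime) (h : ¬(n = 2 ∧ p = 2)) :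
    n + 1 ≤ p ^ (n - 1) := by
  rcases hp.two_le.eq_or_lt with rfl | hp3
  · obtain ⟨j, rfl⟩ : ∃ j, n = j + 3 := ⟨n - 3, by omega⟩
    have := j.lt_two_pow_self
    rw [show j + 3 - 1 = j + 2 by omega, pow_add]
    omega
  · obtain ⟨j, rfl⟩ : ∃ j, n = j + 2 := ⟨n - 2, by omega⟩
    have := j.lt_pow_self hp.one_lt
    rw [show j + 2 - 1 = j + 1 by omega, pow_succ]
    nlinarith

/-- `AGL(n, p)` contains an element of order `p^n` iff `(n, p) = (2, 2)`;
moreover `AGL(2, 2) ≅ S₄`. -/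
theorem agl_orderOf_pow_iff (n p : ℕ) (hn : 2 ≤ n) (hp : p.Prime) :
    ((∃ g : (Fin n → ZMod p) ≃ᵃ[ZMod p] (Fin n → ZMod p), orderOf g = p ^ n) ↔
      (n = 2 ∧ p = 2)) ∧
    Nonempty (((Fin 2 → ZMod 2) ≃ᵃ[ZMod 2] (Fin 2 → ZMod 2)) ≃* Equiv.Perm (Fin 4)) := by
  refine ⟨⟨fun ⟨g, hg⟩ => ?_, ?_⟩, ⟨affineEquivZModTwoSqMulEquivPermFinFour⟩⟩
  · by_contra h
    have : Fact p.Prime := ⟨hp⟩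
    have hpow : g ^ p ^ (n - 1) = 1 :=
      AffineEquiv.pow_expChar_pow_eq_one p (hg ▸ pow_orderOf_eq_one g)
        (by simpa using Nat.succ_le_prime_pow_pred hn hp h)
    have hle := (Nat.pow_dvd_pow_iff_le_right hp.one_lt).mp (hg ▸ orderOf_dvd_of_pow_eq_one hpow)
    omega
  · rintro ⟨rfl, rfl⟩
    exact exists_affineEquiv_zmod_two_sq_orderOf_eq_four
end

section
/- Let G = AB be a finite group with A and B abelian subgroups. Then the derived subgroup G' is abelian, i.e. G is metabelian. -/
/-!
Let `N = ⁅A, B⁆`. Both `A` and `B` normalize `N`, so `N` is normal in `G = A ⊔ B`, and modulo `N`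
the images of `A` and `B` are abelian and commute with each other, so `G' ≤ N`.
Itô's observation is that `N` is abelian. Conjugating `⁅a, b⁆` by `a₁ ∈ A` gives `⁅a, b₂⁆`, where
`b₂` is the `B`-part of `a₁ b a₁⁻¹ ∈ BA` and does not depend on `a`; symmetrically, conjugating by
`b₁ ∈ B` gives `⁅a₂, b⁆` with `a₂` independent of `b`. Hence conjugation by `a₁ b₁` and by `b₁ a₁`
both send `⁅a, b⁆` to `⁅a₂, b₂⁆`, i.e. `⁅a, b⁆` commutes with `(b₁ a₁)⁻¹ a₁ b₁ = ⁅a₁⁻¹, b₁⁻¹⁆`.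
-/

open scoped commutatorElement

section

variable {G : Type*} [Group G]

theorem commutatorElement_mul_right_of_commute {x y z : G} (h : Commute x z) :
    ⁅x, y * z⁆ = ⁅x, y⁆ := by
  simp [commutatorElement_def, mul_assoc, ← h.inv_left.eq]

theorem commute_inv_mul_of_conj_eq {x u v : G} (h : u * x * u⁻¹ = v * x * v⁻¹) :
    Commute (v⁻¹ * u) x :=
  calc v⁻¹ * u * x = v⁻¹ * (u * x * u⁻¹) * u := by group
    _ = x * (v⁻¹ * u) := by rw [h]; group

end

namespace Subgroup

variable {G : Type*} [Group G] {H K : Subgroup G}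

theorem forall_exists_mul_swap (hHK : ∀ g : G, ∃ h ∈ H, ∃ k ∈ K, g = h * k) :
    ∀ g : G, ∃ k ∈ K, ∃ h ∈ H, g = k * h := by
  intro g
  obtain ⟨h, hh, k, hk, hg⟩ := hHK g⁻¹
  exact ⟨k⁻¹, inv_mem hk, h⁻¹, inv_mem hh, by rw [← mul_inv_rev, ← hg, inv_inv]⟩

theorem sup_eq_top_of_forall_exists_mul (hHK : ∀ g : G, ∃ h ∈ H, ∃ k ∈ K, g = h * k) :
    H ⊔ K = ⊤ := by
  refine eq_top_iff' _ |>.mpr fun g => ?_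
  obtain ⟨h, hh, k, hk, rfl⟩ := hHK g
  exact mul_mem_sup hh hk

theorem normal_commutator_of_sup_eq_top (hHK : H ⊔ K = ⊤) : ⁅H, K⁆.Normal := by
  rw [← normalizer_eq_top_iff, eq_top_iff, ← hHK]
  exact sup_le (normalizer_commutator_ge_left H K) (normalizer_commutator_ge_right H K)

theorem commutator_le_of_forall_exists_mul {N : Subgroup G} [N.Normal]
    (hH : ∀ x ∈ H, ∀ y ∈ H, x * y = y * x) (hK : ∀ x ∈ K, ∀ y ∈ K, x * y = y * x)
    (hHK : ∀ g : G, ∃ h ∈ H, ∃ k ∈ K, g = h * k) (hN : ⁅H, K⁆ ≤ N) :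
    _root_.commutator G ≤ N := by
  have hmk {x y : G} (hxy : ⁅x, y⁆ ∈ N) : Commute (x : G ⧸ N) y := by
    rw [← commutatorElement_eq_one_iff_commute, ← QuotientGroup.mk'_apply,
      ← QuotientGroup.mk'_apply, ← map_commutatorElement, QuotientGroup.mk'_apply,
      QuotientGroup.eq_one_iff]
    exact hxy
  have hmk_of_comm {x y : G} (hxy : x * y = y * x) : Commute (x : G ⧸ N) y :=
    hmk <| by rw [commutatorElement_eq_one_iff_mul_comm.mpr hxy]; exact one_mem N
  refine Normal.quotient_commutative_iff_commutator_le.mp ⟨⟨fun p q => ?_⟩⟩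
  obtain ⟨g, rfl⟩ := QuotientGroup.mk_surjective p
  obtain ⟨g', rfl⟩ := QuotientGroup.mk_surjective q
  obtain ⟨h, hh, k, hk, rfl⟩ := hHK g
  obtain ⟨h', hh', k', hk', rfl⟩ := hHK g'
  simp only [QuotientGroup.mk_mul]
  have hhk' := hmk (hN (commutator_mem_commutator hh hk'))
  have hh'k := hmk (hN (commutator_mem_commutator hh' hk))
  exact ((hmk_of_comm (hH h hh h' hh')).mul_right hhk').mul_left
    (hh'k.symm.mul_right (hmk_of_comm (hK k hk k' hk')))

theorem exists_conj_commutatorElement_eq_of_mem_left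
    (hH : ∀ x ∈ H, ∀ y ∈ H, x * y = y * x) (hKH : ∀ g : G, ∃ k ∈ K, ∃ h ∈ H, g = k * h)
    {h₁ : G} (k : G) (hh₁ : h₁ ∈ H) : ∃ k₁ ∈ K, ∀ h ∈ H, h₁ * ⁅h, k⁆ * h₁⁻¹ = ⁅h, k₁⁆ := by
  obtain ⟨k₁, hk₁, c, hc, hconj⟩ := hKH (h₁ * k * h₁⁻¹)
  refine ⟨k₁, hk₁, fun h hh => ?_⟩
  have hfix : h₁ * h * h₁⁻¹ = h := by rw [hH h₁ hh₁ h hh, mul_inv_cancel_right]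
  rw [conjugate_commutatorElement, hfix, hconj,
    commutatorElement_mul_right_of_commute (hH h hh c hc)]

theorem exists_conj_commutatorElement_eq_of_mem_right
    (hK : ∀ x ∈ K, ∀ y ∈ K, x * y = y * x) (hHK : ∀ g : G, ∃ h ∈ H, ∃ k ∈ K, g = h * k)
    {k₁ : G} (h : G) (hk₁ : k₁ ∈ K) : ∃ h₁ ∈ H, ∀ k ∈ K, k₁ * ⁅h, k⁆ * k₁⁻¹ = ⁅h₁, k⁆ := by
  obtain ⟨h₁, hh₁, hconj⟩ := exists_conj_commutatorElement_eq_of_mem_left hK hHK h hk₁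
  refine ⟨h₁, hh₁, fun k hk => ?_⟩
  rw [← commutatorElement_inv k h₁, ← hconj k hk, ← commutatorElement_inv]
  group

theorem commute_commutatorElement_of_forall_exists_mul
    (hH : ∀ x ∈ H, ∀ y ∈ H, x * y = y * x) (hK : ∀ x ∈ K, ∀ y ∈ K, x * y = y * x)
    (hHK : ∀ g : G, ∃ h ∈ H, ∃ k ∈ K, g = h * k) {h k h' k' : G}
    (hh : h ∈ H) (hk : k ∈ K) (hh' : h' ∈ H) (hk' : k' ∈ K) :
    Commute ⁅h, k⁆ ⁅h', k'⁆ := by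
  obtain ⟨k₂, hk₂, hconjH⟩ :=
    exists_conj_commutatorElement_eq_of_mem_left hH (forall_exists_mul_swap hHK) k (inv_mem hh')
  obtain ⟨h₂, hh₂, hconjK⟩ := exists_conj_commutatorElement_eq_of_mem_right hK hHK h (inv_mem hk')
  have hconj : (h'⁻¹ * k'⁻¹) * ⁅h, k⁆ * (h'⁻¹ * k'⁻¹)⁻¹
      = (k'⁻¹ * h'⁻¹) * ⁅h, k⁆ * (k'⁻¹ * h'⁻¹)⁻¹ :=
    calc _ = h'⁻¹ * (k'⁻¹ * ⁅h, k⁆ * k'⁻¹⁻¹) * h'⁻¹⁻¹ := by group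
      _ = ⁅h₂, k₂⁆ := by rw [hconjK k hk, hconjH h₂ hh₂]
      _ = k'⁻¹ * (h'⁻¹ * ⁅h, k⁆ * h'⁻¹⁻¹) * k'⁻¹⁻¹ := by rw [hconjH h hh, hconjK k₂ hk₂]
      _ = _ := by group
  simpa [commutatorElement_def, mul_assoc] using (commute_inv_mul_of_conj_eq hconj).symm

theorem isMulCommutative_commutator_of_forall_exists_mul
    (hH : ∀ x ∈ H, ∀ y ∈ H, x * y = y * x) (hK : ∀ x ∈ K, ∀ y ∈ K, x * y = y * x)
    (hHK : ∀ g : G, ∃ h ∈ H, ∃ k ∈ K, g = h * k) : IsMulCommutative (⁅H, K⁆ : Subgroup G) := by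
  rw [commutator_def]
  refine isMulCommutative_closure ?_
  rintro _ ⟨h, hh, k, hk, rfl⟩ _ ⟨h', hh', k', hk', rfl⟩
  exact commute_commutatorElement_of_forall_exists_mul hH hK hHK hh hk hh' hk'

end Subgroup

theorem metabelian_of_mul_abelian_general {G : Type*} [Group G]
    (A B : Subgroup G)
    (hA : ∀ x ∈ A, ∀ y ∈ A, x * y = y * x)
    (hB : ∀ x ∈ B, ∀ y ∈ B, x * y = y * x)
    (hfact : ∀ g : G, ∃ a ∈ A, ∃ b ∈ B, g = a * b) :
    ∀ x ∈ commutator G, ∀ y ∈ commutator G, x * y = y * x := by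
  have hnormal : (⁅A, B⁆ : Subgroup G).Normal :=
    Subgroup.normal_commutator_of_sup_eq_top (Subgroup.sup_eq_top_of_forall_exists_mul hfact)
  have hcomm : IsMulCommutative (⁅A, B⁆ : Subgroup G) :=
    Subgroup.isMulCommutative_commutator_of_forall_exists_mul hA hB hfact
  have hle : commutator G ≤ ⁅A, B⁆ := Subgroup.commutator_le_of_forall_exists_mul hA hB hfact le_rfl
  exact fun x hx y hy => setLike_mul_comm (hle hx) (hle hy)

/-- Itô: a finite group that is the product of two abelian subgroups is metabelian. -/
theorem metabelian_of_mul_abelian {G : Type*} [Group G] [Finite G]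
    (A B : Subgroup G)
    (hA : ∀ x ∈ A, ∀ y ∈ A, x * y = y * x)
    (hB : ∀ x ∈ B, ∀ y ∈ B, x * y = y * x)
    (hfact : ∀ g : G, ∃ a ∈ A, ∃ b ∈ B, g = a * b) :
    ∀ x ∈ commutator G, ∀ y ∈ commutator G, x * y = y * x :=
  metabelian_of_mul_abelian_general A B hA hB hfact
end

section
/- Let G = AB be a finite group with subgroups A, B, let p be a prime, and let A_p ∈ Syl_p(A), B_p ∈ Syl_p(B) be suitably chosen Sylow p-subgroups. Then there exist such choices with A_p B_p a Sylow p-subgroup of G. -/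
/-!
Choose Sylow subgroups `T ⊇ A_p` and `S ⊇ B_p` of `G` and write the element conjugating `S` to `T`
as `ab` with `a ∈ A`, `b ∈ B`. Then `bSb⁻¹` contains both `a⁻¹A_pa ∈ Syl_p(A)` and
`bB_pb⁻¹ ∈ Syl_p(B)`. A `p`-subgroup containing Sylow subgroups `K` of `A` and `L` of `B` is `KL`:
since `|G||A ∩ B| = |A||B|` and `|K ∩ L| ≤ |A ∩ B|_p`, we get `|KL| = |K||L|/|K ∩ L| ≥ |G|_p`.
-/

open scoped Pointwise

namespace Subgroup
variable {G : Type*} [Group G]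

theorem card_mul_mul_card_inf (H K : Subgroup G) :
    Nat.card ((H : Set G) * (K : Set G)) * Nat.card (H ⊓ K : Subgroup G) =
      Nat.card H * Nat.card K := by
  -- `HK/K` is the `H`-orbit of the coset `K`, whose stabiliser is `H ∩ K`.
  have hsmul (h : H) (g : G) : h • (g : G ⧸ K) = ((h * g : G) : G ⧸ K) := rfl
  have himage : (QuotientGroup.mk '' (H : Set G) : Set (G ⧸ K)) =
      MulAction.orbit H ((1 : G) : G ⧸ K) := by
    ext x
    simp [MulAction.mem_orbit_iff, hsmul]
  have hstab : MulAction.stabilizer H ((1 : G) : G ⧸ K) = K.subgroupOf H := by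
    ext h
    simp [hsmul, QuotientGroup.eq, mem_subgroupOf]
  have hinf : Nat.card (K.subgroupOf H) = Nat.card (H ⊓ K : Subgroup G) := by
    rw [← inf_subgroupOf_left]
    exact Nat.card_congr (subgroupOfEquivOfLe inf_le_left).toEquiv
  rw [card_mul_eq_card_subgroup_mul_card_quotient, himage,
    Nat.card_congr (MulAction.orbitEquivQuotientStabilizer H _), hstab, ← hinf, mul_assoc,
    ← card_eq_card_quotient_mul_card_subgroup, mul_comm]

theorem card_mul_card_inf_of_mul_eq_univ {A B : Subgroup G}
    (hAB : (A : Set G) * (B : Set G) = Set.univ) :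
    Nat.card G * Nat.card (A ⊓ B : Subgroup G) = Nat.card A * Nat.card B := by
  rw [← card_mul_mul_card_inf, hAB, Nat.card_univ]

theorem map_subtype_conj_smul (H : Subgroup G) (h : H) (K : Subgroup H) :
    (MulAut.conj h • K).map H.subtype = MulAut.conj (h : G) • K.map H.subtype := by
  ext x
  simp only [mem_map, mem_pointwise_smul_iff_inv_smul_mem]
  constructor
  · rintro ⟨y, hy, rfl⟩
    exact ⟨_, hy, by simp⟩
  · rintro ⟨y, hy, hyx⟩
    simp only [coe_subtype, MulAut.smul_def, MulAut.conj_inv_apply] at hyx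
    have hx : x = h * y * h⁻¹ := by simp [hyx, mul_assoc]
    refine ⟨h * y * h⁻¹, ?_, hx.symm ▸ rfl⟩
    simpa [mul_assoc] using hy

end Subgroup

section
variable {G : Type*} [Group G] [Finite G] {p : ℕ} [hp : Fact p.Prime]

theorem IsPGroup.card_dvd_ordProj_of_le {P H : Subgroup G} (hP : IsPGroup p P) (hPH : P ≤ H) :
    Nat.card P ∣ ordProj[p] (Nat.card H) := by
  obtain ⟨k, hk⟩ := IsPGroup.iff_card.mp hP
  rw [hk, ← hp.out.pow_dvd_iff_dvd_ordProj Nat.card_pos.ne', ← hk]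
  exact Subgroup.card_dvd_of_le hPH

theorem Subgroup.ordProj_card_le_card_mul {A B K L : Subgroup G}
    (hAB : (A : Set G) * (B : Set G) = Set.univ) (hKA : K ≤ A) (hLB : L ≤ B)
    (hK : Nat.card K = ordProj[p] (Nat.card A)) (hL : Nat.card L = ordProj[p] (Nat.card B)) :
    ordProj[p] (Nat.card G) ≤ Nat.card ((K : Set G) * (L : Set G)) := by
  have hKL : Nat.card (K ⊓ L : Subgroup G) ≤ ordProj[p] (Nat.card (A ⊓ B : Subgroup G)) :=
    Nat.le_of_dvd (Nat.ordProj_pos _ _)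
      ((IsPGroup.of_card hK).to_inf_left.card_dvd_ordProj_of_le (inf_le_inf hKA hLB))
  refine Nat.le_of_mul_le_mul_right ?_ (Nat.card_pos (α := (K ⊓ L : Subgroup G)))
  calc ordProj[p] (Nat.card G) * Nat.card (K ⊓ L : Subgroup G)
      ≤ ordProj[p] (Nat.card G) * ordProj[p] (Nat.card (A ⊓ B : Subgroup G)) :=
        Nat.mul_le_mul_left _ hKL
    _ = ordProj[p] (Nat.card A * Nat.card B) := by
        rw [← Subgroup.card_mul_card_inf_of_mul_eq_univ hAB,
          Nat.ordProj_mul _ Nat.card_pos.ne' Nat.card_pos.ne']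
    _ = Nat.card ((K : Set G) * (L : Set G)) * Nat.card (K ⊓ L : Subgroup G) := by
        rw [Nat.ordProj_mul _ Nat.card_pos.ne' Nat.card_pos.ne', ← hK, ← hL,
          Subgroup.card_mul_mul_card_inf]

namespace Sylow

theorem map_subtype_mul_map_subtype_eq {A B : Subgroup G}
    (hAB : (A : Set G) * (B : Set G) = Set.univ) (P : Sylow p A) (Q : Sylow p B) (S : Sylow p G)
    (hPS : (P : Subgroup A).map A.subtype ≤ S) (hQS : (Q : Subgroup B).map B.subtype ≤ S) :
    ((P : Subgroup A).map A.subtype : Set G) * ((Q : Subgroup B).map B.subtype : Set G) =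
      ((S : Subgroup G) : Set G) := by
  have hcard (H : Subgroup G) (R : Sylow p H) :
      Nat.card ((R : Subgroup H).map H.subtype) = ordProj[p] (Nat.card H) := by
    rw [Subgroup.card_map_of_injective H.subtype_injective, R.card_eq_multiplicity]
  refine Set.eq_of_subset_of_ncard_le (Set.mul_subset_iff.mpr fun x hx y hy ↦
    mul_mem (hPS hx) (hQS hy)) ?_ (Set.toFinite _)
  rw [← Nat.card_coe_set_eq, ← Nat.card_coe_set_eq, SetLike.coe_sort_coe, S.card_eq_multiplicity]
  exact Subgroup.ordProj_card_le_card_mul hAB (Subgroup.map_subtype_le _) (Subgroup.map_subtype_le _)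
    (hcard A P) (hcard B Q)

theorem exists_map_subtype_le_of_mul_eq_univ {A B : Subgroup G}
    (hAB : (A : Set G) * (B : Set G) = Set.univ) :
    ∃ (P : Sylow p A) (Q : Sylow p B) (S : Sylow p G),
      (P : Subgroup A).map A.subtype ≤ S ∧ (Q : Subgroup B).map B.subtype ≤ S := by
  obtain ⟨P⟩ : Nonempty (Sylow p A) := inferInstance
  obtain ⟨Q⟩ : Nonempty (Sylow p B) := inferInstance
  obtain ⟨T, hPT⟩ := (P.2.map A.subtype).exists_le_sylow
  obtain ⟨S, hQS⟩ := (Q.2.map B.subtype).exists_le_sylow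
  obtain ⟨g, rfl⟩ := MulAction.exists_smul_eq G S T
  obtain ⟨a, ha, b, hb, rfl⟩ : g ∈ (A : Set G) * (B : Set G) := hAB ▸ Set.mem_univ g
  refine ⟨(⟨a, ha⟩⁻¹ : A) • P, (⟨b, hb⟩ : B) • Q, b • S, ?_, ?_⟩
  · rw [coe_subgroup_smul, Subgroup.map_subtype_conj_smul, show b • S = a⁻¹ • (a * b) • S by
      rw [mul_smul, inv_smul_smul], coe_subgroup_smul (g := a⁻¹)]
    exact Subgroup.pointwise_smul_le_pointwise_smul_iff.mpr hPT
  · rw [coe_subgroup_smul, Subgroup.map_subtype_conj_smul, coe_subgroup_smul]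
    exact Subgroup.pointwise_smul_le_pointwise_smul_iff.mpr hQS

end Sylow

end

/-- Wielandt: in a factorized finite group `G = AB`, Sylow `p`-subgroups `A_p ≤ A`,
`B_p ≤ B` may be chosen so that `A_p B_p` is a Sylow `p`-subgroup of `G`. -/
theorem sylow_of_factorized {G : Type*} [Group G] [Finite G] (A B : Subgroup G)
    (p : ℕ) (hp : p.Prime)
    (hfact : ∀ g : G, ∃ a ∈ A, ∃ b ∈ B, g = a * b) :
    ∃ (P : Sylow p A) (Q : Sylow p B) (R : Sylow p G),
      ((Subgroup.map A.subtype (P : Subgroup A) : Subgroup G) : Set G) *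
        ((Subgroup.map B.subtype (Q : Subgroup B) : Subgroup G) : Set G) =
        ((R : Subgroup G) : Set G) := by
  have : Fact p.Prime := ⟨hp⟩
  have hAB : (A : Set G) * (B : Set G) = Set.univ := Set.eq_univ_of_forall fun g ↦ by
    obtain ⟨a, ha, b, hb, rfl⟩ := hfact g
    exact Set.mul_mem_mul ha hb
  obtain ⟨P, Q, S, hPS, hQS⟩ := Sylow.exists_map_subtype_le_of_mul_eq_univ (p := p) hAB
  exact ⟨P, Q, S, Sylow.map_subtype_mul_map_subtype_eq hAB P Q S hPS hQS⟩
end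

section
/- Let N ≤ M ≤ G be finite groups with N an abelian normal subgroup of G such that gcd(|N|, [G:M]) = 1. If N has a complement in M, then N has a complement in G. -/
/-!
A complement of an abelian normal subgroup `N` of `G` is the kernel of a 1-cocycle `G → N` (for
the conjugation action) that restricts to the identity on `N`. A complement of `N` in `M` gives
such a cocycle on `M`. Its corestriction to `G`, a product over a transversal of `M`, is a cocycle
on `G` restricting to `n ↦ n ^ [G : M]` on `N`; as `[G : M]` is prime to `|N|`, a power of it
restricts to the identity on `N`, and its kernel is a complement of `N` in `G`.
-/

open scoped IsMulCommutative

namespace QuotientGroup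

variable {G : Type*} [Group G] {H : Subgroup G}

theorem out_inv_mul_mul_out_mem (g : G) (q : G ⧸ H) : (g • q).out⁻¹ * (g * q.out) ∈ H := by
  rw [← QuotientGroup.eq, QuotientGroup.out_eq', ← smul_eq_mul, ← MulAction.Quotient.smul_mk,
    QuotientGroup.out_eq']

noncomputable def transferFactor (g : G) (q : G ⧸ H) : H :=
  ⟨(g • q).out⁻¹ * (g * q.out), out_inv_mul_mul_out_mem g q⟩

theorem out_mul_transferFactor (g : G) (q : G ⧸ H) :
    (g • q).out * (transferFactor g q : G) = g * q.out :=
  mul_inv_cancel_left _ _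

theorem transferFactor_mul (g₁ g₂ : G) (q : G ⧸ H) :
    transferFactor (g₁ * g₂) q = transferFactor g₁ (g₂ • q) * transferFactor g₂ q := by
  ext
  simp only [transferFactor, Subgroup.coe_mul, mul_smul]
  group

end QuotientGroup

theorem exists_zpow_pow_eq_self {A : Type*} [Group A] {n : ℕ} (h : (Nat.card A).Coprime n) :
    ∃ k : ℤ, ∀ a : A, (a ^ n) ^ k = a :=
  ⟨_, (powCoprime h).left_inv⟩

-- `G` acts itself rather than through `ConjAct G`, so that cocycles on `G` and on its subgroups
-- are taken for one and the same action.
noncomputable abbrev Subgroup.conjMulDistribMulAction {G : Type*} [Group G] (N : Subgroup G)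
    [N.Normal] : MulDistribMulAction G N :=
  MulDistribMulAction.compHom N (MulAut.conjNormal (H := N))

attribute [local instance] Subgroup.conjMulDistribMulAction

theorem Subgroup.coe_conj_smul {G : Type*} [Group G] {N : Subgroup G} [N.Normal] (g : G) (n : N) :
    ((g • n : N) : G) = g * n * g⁻¹ :=
  MulAut.conjNormal_apply g n

namespace groupCohomology

section Cocycle

variable {G A : Type*} [Group G] [CommGroup A] [MulDistribMulAction G A]

theorem IsMulCocycle₁.zpow {f : G → A} (hf : IsMulCocycle₁ f) (k : ℤ) :
    IsMulCocycle₁ fun g => f g ^ k := by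
  intro g h
  simp only [hf g h, mul_zpow, smul_zpow']

noncomputable def IsMulCocycle₁.ker {f : G → A} (hf : IsMulCocycle₁ f) : Subgroup G where
  carrier := {g | f g = 1}
  one_mem' := map_one_of_isMulCocycle₁ hf
  mul_mem' {a b} (ha : f a = 1) (hb : f b = 1) := by
    simp only [Set.mem_ofPred_eq, hf a b, ha, hb, smul_one, mul_one]
  inv_mem' {a} (ha : f a = 1) := by
    simp only [Set.mem_ofPred_eq]
    rw [← inv_smul_smul a (f a⁻¹), map_inv_of_isMulCocycle₁ hf, ha, inv_one, smul_one]

open QuotientGroup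

variable {H : Subgroup G} [Fintype (G ⧸ H)]

noncomputable def corestriction (f : H → A) (g : G) : A :=
  ∏ q : G ⧸ H, (g • q).out • f (transferFactor g q)

theorem IsMulCocycle₁.corestriction {f : H → A} (hf : IsMulCocycle₁ f) :
    IsMulCocycle₁ (corestriction f) := by
  intro g₁ g₂
  have hsplit (q : G ⧸ H) : ((g₁ * g₂) • q).out • f (transferFactor (g₁ * g₂) q) =
      g₁ • ((g₂ • q).out • f (transferFactor g₂ q)) *
        (g₁ • g₂ • q).out • f (transferFactor g₁ (g₂ • q)) := by
    rw [transferFactor_mul, hf, smul_mul', Subgroup.smul_def, ← mul_smul, mul_smul g₁ g₂,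
      out_mul_transferFactor, mul_smul]
  simp only [groupCohomology.corestriction, hsplit, Finset.prod_mul_distrib, Finset.smul_prod']
  congr 1
  exact Equiv.prod_comp (MulAction.toPerm g₂) fun q => (g₁ • q).out • f (transferFactor g₁ q)

end Cocycle

section Conjugation

variable {G : Type*} [Group G] {N : Subgroup G} [N.Normal] [IsMulCommutative N]

theorem exists_isMulCocycle₁_of_inf_eq_bot {M K : Subgroup G} (hNM : N ≤ M) (hNK : N ⊓ K = ⊥)
    (hdecomp : ∀ m ∈ M, ∃ x ∈ N, ∃ y ∈ K, m = x * y) :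
    ∃ f : M → N, IsMulCocycle₁ f ∧ ∀ n : N, f ⟨n, hNM n.2⟩ = n := by
  choose x hxN y hyK hxy using fun m : M => hdecomp m m.2
  have huniq (m : M) (x' : N) (y' : K) (h : (m : G) = x' * y') : x m = x' :=
    congrArg (fun p : N × K => (p.1 : G)) <| Subgroup.mul_injective_of_disjoint
      (disjoint_iff.mpr hNK) (a₁ := (⟨x m, hxN m⟩, ⟨y m, hyK m⟩)) (a₂ := (x', y'))
      ((hxy m).symm.trans h)
  refine ⟨fun m => ⟨x m, hxN m⟩, fun m₁ m₂ => Subtype.ext ?_, fun n => Subtype.ext ?_⟩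
  · refine huniq _ (m₁ • ⟨x m₂, hxN m₂⟩ * ⟨x m₁, hxN m₁⟩) (⟨y m₁, hyK m₁⟩ * ⟨y m₂, hyK m₂⟩) ?_
    simp only [Subgroup.coe_mul, Subgroup.smul_def, Subgroup.coe_conj_smul]
    rw [mul_assoc _ (x m₁), ← mul_assoc (x m₁), ← hxy m₁, hxy m₂]
    group
  · exact huniq _ n 1 (mul_one _).symm

theorem corestriction_eq_pow {H : Subgroup G} [Fintype (G ⧸ H)] (hNH : N ≤ H) {f : H → N}
    (hf : ∀ n : N, f ⟨n, hNH n.2⟩ = n) (n : N) : corestriction f n = n ^ H.index := by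
  have hfix (q : G ⧸ H) : (n : G) • q = q := by
    induction q using QuotientGroup.induction_on with | H x => ?_
    rw [MulAction.Quotient.smul_mk, smul_eq_mul, QuotientGroup.eq]
    convert hNH (x⁻¹ • n⁻¹ : N).2 using 1
    rw [Subgroup.coe_conj_smul, Subgroup.coe_inv]
    group
  have hterm (q : G ⧸ H) : ((n : G) • q).out • f (QuotientGroup.transferFactor (n : G) q) = n := by
    have : QuotientGroup.transferFactor (n : G) q =
        ⟨((q.out⁻¹ • n : N) : G), hNH (q.out⁻¹ • n).2⟩ := by
      ext
      simp only [QuotientGroup.transferFactor, Subgroup.coe_conj_smul, hfix]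
      group
    rw [this, hf, hfix, smul_inv_smul]
  rw [corestriction, Finset.prod_congr rfl fun q _ => hterm q, Finset.prod_const,
    Finset.card_univ, ← Nat.card_eq_fintype_card, Subgroup.index_eq_card]

theorem IsMulCocycle₁.inf_ker_eq_bot {f : G → N} (hf : IsMulCocycle₁ f)
    (hfN : ∀ n : N, f n = n) : N ⊓ hf.ker = ⊥ := by
  refine eq_bot_iff.mpr fun g ⟨hgN, hgK⟩ => ?_
  have : (⟨g, hgN⟩ : N) = 1 := (hfN ⟨g, hgN⟩).symm.trans hgK
  simpa using congrArg Subtype.val this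

theorem IsMulCocycle₁.exists_mem_mul_mem_ker {f : G → N} (hf : IsMulCocycle₁ f)
    (hfN : ∀ n : N, f n = n) (g : G) : ∃ x ∈ N, ∃ y ∈ hf.ker, g = x * y := by
  refine ⟨f g, (f g).2, ((f g)⁻¹ : N) * g, ?_, by simp⟩
  have hfix : (((f g)⁻¹ : N) : G) • f g = f g :=
    Subtype.ext <| by rw [Subgroup.coe_conj_smul]; simp
  show f (((f g)⁻¹ : N) * g) = 1
  rw [hf, hfix, hfN, mul_inv_cancel]

end Conjugation

end groupCohomology

/-- Gaschütz: if `N ≤ M ≤ G`, `N` abelian normal in `G`, `gcd(|N|, [G:M]) = 1`, and `N`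
has a complement in `M`, then `N` has a complement in `G`. -/
theorem gaschuetz {G : Type*} [Group G] [Finite G] (N M : Subgroup G)
    (hNM : N ≤ M) (hnorm : N.Normal)
    (hab : ∀ x ∈ N, ∀ y ∈ N, x * y = y * x)
    (hcop : Nat.Coprime (Nat.card N) M.index)
    (hcompl : ∃ K : Subgroup G, K ≤ M ∧ N ⊓ K = ⊥ ∧
      ∀ m ∈ M, ∃ x ∈ N, ∃ y ∈ K, m = x * y) :
    ∃ K : Subgroup G, N ⊓ K = ⊥ ∧ ∀ g : G, ∃ x ∈ N, ∃ y ∈ K, g = x * y := by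
  obtain ⟨K, -, hNK, hdecomp⟩ := hcompl
  have := hnorm
  have : IsMulCommutative N := ⟨⟨fun a b => Subtype.ext (hab a a.2 b b.2)⟩⟩
  have : Fintype (G ⧸ M) := Fintype.ofFinite _
  obtain ⟨f, hf, hfN⟩ := groupCohomology.exists_isMulCocycle₁_of_inf_eq_bot hNM hNK hdecomp
  obtain ⟨k, hk⟩ := exists_zpow_pow_eq_self hcop
  have he := hf.corestriction.zpow k
  have heN (n : N) : groupCohomology.corestriction f n ^ k = n := by
    rw [groupCohomology.corestriction_eq_pow hNM hfN, hk]
  exact ⟨he.ker, he.inf_ker_eq_bot heN, he.exists_mem_mul_mem_ker heN⟩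
end

section
/- Let X = G⟨c⟩ be a finite group with G = ⟨a,b⟩ either a dihedral group D_{2n} or a generalized quaternion group Q_{4n}, ⟨c⟩ cyclic, G ∩ ⟨c⟩ = 1, and suppose the core ⟨c⟩_X of ⟨c⟩ in X is nontrivial. Then ⟨a^2, c⟩ ≤ C_X(⟨c⟩_X) and the index |X : C_X(⟨c⟩_X)| is at most 4. -/
private lemma exists_gen' {X : Type*} [Group X] (c : X) (N : Subgroup X)
    (h : N ≤ Subgroup.zpowers c) : ∃ d : X, N = Subgroup.zpowers d := by
  have hcyc : IsCyclic ↥(Subgroup.zpowers c) := by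
    refine ⟨⟨⟨c, Subgroup.mem_zpowers c⟩, ?_⟩⟩
    rintro ⟨x, k, rfl⟩
    exact ⟨k, by ext; simp⟩
  have := Subgroup.isCyclic (N.subgroupOf (Subgroup.zpowers c))
  obtain ⟨⟨⟨d, hd⟩, hdN⟩, hgen⟩ := this.exists_generator
  refine ⟨d, le_antisymm ?_ ?_⟩
  · intro g hg
    obtain ⟨k, hk⟩ := hgen ⟨⟨g, h hg⟩, hg⟩
    refine ⟨k, ?_⟩
    have := congrArg (fun x : ↥(N.subgroupOf (Subgroup.zpowers c)) => ((x : ↥(Subgroup.zpowers c)) : X)) hk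
    simpa using this
  · exact (Subgroup.zpowers_le).mpr hdN

private lemma sq_conj' {X : Type*} [Group X] (a b d : X) (hrel : b * a * b⁻¹ = a⁻¹)
    (ha : ∃ i : ℤ, a * d * a⁻¹ = d ^ i)
    (hb : ∃ j : ℤ, b * d * b⁻¹ = d ^ j)
    (hb' : ∃ j' : ℤ, b⁻¹ * d * b = d ^ j') :
    a ^ 2 * d * (a ^ 2)⁻¹ = d := by
  obtain ⟨i, hi⟩ := ha
  obtain ⟨j, hj⟩ := hb
  obtain ⟨j', hj'⟩ := hb'
  have h1 : (d ^ (j * j') : X) = d := by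
    have : b * (b⁻¹ * d * b) * b⁻¹ = d := by group
    calc d ^ (j * j') = (d ^ j) ^ j' := by rw [zpow_mul]
      _ = (b * d * b⁻¹) ^ j' := by rw [hj]
      _ = b * d ^ j' * b⁻¹ := conj_zpow
      _ = b * (b⁻¹ * d * b) * b⁻¹ := by rw [hj']
      _ = d := this
  have h2 : a⁻¹ * d * a = d ^ i := by
    have ha' : a = b * a⁻¹ * b⁻¹ := by
      have := congrArg Inv.inv hrel
      simp only [mul_inv_rev, inv_inv] at this
      simpa [mul_assoc] using this.symm
    calc a⁻¹ * d * a = (b * a * b⁻¹) * d * (b * a⁻¹ * b⁻¹) := by rw [hrel, ← ha']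
      _ = b * (a * (b⁻¹ * d * b) * a⁻¹) * b⁻¹ := by group
      _ = b * (a * d ^ j' * a⁻¹) * b⁻¹ := by rw [hj']
      _ = b * (a * d * a⁻¹) ^ j' * b⁻¹ := by rw [conj_zpow]
      _ = b * (d ^ i) ^ j' * b⁻¹ := by rw [hi]
      _ = b * d ^ (i * j') * b⁻¹ := by rw [zpow_mul]
      _ = (b * d * b⁻¹) ^ (i * j') := conj_zpow.symm
      _ = (d ^ j) ^ (i * j') := by rw [hj]
      _ = (d ^ (j * j')) ^ i := by rw [← zpow_mul, ← zpow_mul]; ring_nf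
      _ = d ^ i := by rw [h1]
  have h3 : d = d ^ (i * i) := by
    calc d = a * (a⁻¹ * d * a) * a⁻¹ := by group
      _ = a * d ^ i * a⁻¹ := by rw [h2]
      _ = (a * d * a⁻¹) ^ i := conj_zpow.symm
      _ = (d ^ i) ^ i := by rw [hi]
      _ = d ^ (i * i) := by rw [zpow_mul]
  calc a ^ 2 * d * (a ^ 2)⁻¹ = a * (a * d * a⁻¹) * a⁻¹ := by rw [pow_two, mul_inv_rev]; group
    _ = a * d ^ i * a⁻¹ := by rw [hi]
    _ = (a * d * a⁻¹) ^ i := conj_zpow.symm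
    _ = (d ^ i) ^ i := by rw [hi]
    _ = d ^ (i * i) := by rw [zpow_mul]
    _ = d := h3.symm

private lemma cent_normal' {X : Type*} [Group X] (N : Subgroup X) (hN : N.Normal) :
    (Subgroup.centralizer (N : Set X)).Normal := by
  constructor
  intro h hh g
  rw [Subgroup.mem_centralizer_iff] at hh ⊢
  intro x hx
  have hx' : g⁻¹ * x * g ∈ N := by simpa using hN.conj_mem x hx g⁻¹
  have key := hh _ hx'
  calc x * (g * h * g⁻¹) = g * ((g⁻¹ * x * g) * h) * g⁻¹ := by group
    _ = g * (h * (g⁻¹ * x * g)) * g⁻¹ := by rw [key]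
    _ = (g * h * g⁻¹) * x := by group

/-- If `X = G⟨c⟩` with `G` dihedral or generalized quaternion and the core of `⟨c⟩` in
`X` is nontrivial, then `⟨a², c⟩ ≤ C_X(⟨c⟩_X)` and `|X : C_X(⟨c⟩_X)| ≤ 4`. -/
theorem centralizer_core_index_le_four {X : Type*} [Group X] [Finite X]
    (n : ℕ) (hn : 2 ≤ n) (a b c : X) (G : Subgroup X)
    (hGgen : G = Subgroup.closure {a, b})
    (hrel : b * a * b⁻¹ = a⁻¹)
    (hGtype : (orderOf a = n ∧ orderOf b = 2 ∧ Nat.card G = 2 * n) ∨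
      (orderOf a = 2 * n ∧ b ^ 2 = a ^ n ∧ Nat.card G = 4 * n))
    (hint : G ⊓ Subgroup.zpowers c = ⊥)
    (hfact : ∀ x : X, ∃ g ∈ G, ∃ k : ℤ, x = g * c ^ k)
    (hcore : (Subgroup.zpowers c).normalCore ≠ ⊥) :
    Subgroup.zpowers (a ^ 2) ≤
        Subgroup.centralizer ((Subgroup.zpowers c).normalCore : Set X) ∧
    Subgroup.zpowers c ≤
        Subgroup.centralizer ((Subgroup.zpowers c).normalCore : Set X) ∧
    (Subgroup.centralizer ((Subgroup.zpowers c).normalCore : Set X)).index ≤ 4 := by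
  have hNle : (Subgroup.zpowers c).normalCore ≤ Subgroup.zpowers c := Subgroup.normalCore_le _
  have hNnormal : ((Subgroup.zpowers c).normalCore).Normal := Subgroup.normalCore_normal _
  obtain ⟨d, hd⟩ := exists_gen' c _ hNle
  have hdN : d ∈ (Subgroup.zpowers c).normalCore := hd ▸ Subgroup.mem_zpowers d
  have conj_mem : ∀ x : X, ∃ i : ℤ, x * d * x⁻¹ = d ^ i := by
    intro x
    have : x * d * x⁻¹ ∈ Subgroup.zpowers d := hd ▸ hNnormal.conj_mem d hdN x
    obtain ⟨k, hk⟩ := this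
    exact ⟨k, hk.symm⟩
  have conj_mem' : ∃ j' : ℤ, b⁻¹ * d * b = d ^ j' := by
    have : b⁻¹ * d * (b⁻¹)⁻¹ ∈ Subgroup.zpowers d := hd ▸ hNnormal.conj_mem d hdN b⁻¹
    obtain ⟨k, hk⟩ := this
    exact ⟨k, by simpa using hk.symm⟩
  have key : a ^ 2 * d * (a ^ 2)⁻¹ = d :=
    sq_conj' a b d hrel (conj_mem a) (conj_mem b) conj_mem'
  have ha2 : a ^ 2 ∈ Subgroup.centralizer (((Subgroup.zpowers c).normalCore : Set X)) := by
    rw [Subgroup.mem_centralizer_iff]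
    intro g hg
    rw [hd] at hg
    obtain ⟨k, rfl⟩ := hg
    have : a ^ 2 * d ^ k * (a ^ 2)⁻¹ = d ^ k := by
      calc a ^ 2 * d ^ k * (a ^ 2)⁻¹ = (a ^ 2 * d * (a ^ 2)⁻¹) ^ k := conj_zpow.symm
        _ = d ^ k := by rw [key]
    rw [mul_inv_eq_iff_eq_mul] at this
    exact this.symm
  have hcC : c ∈ Subgroup.centralizer (((Subgroup.zpowers c).normalCore : Set X)) := by
    rw [Subgroup.mem_centralizer_iff]
    intro g hg
    obtain ⟨k, rfl⟩ := hNle hg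
    exact ((Commute.refl c).zpow_left k).eq
  refine ⟨Subgroup.zpowers_le.mpr ha2, Subgroup.zpowers_le.mpr hcC, ?_⟩
  -- the index bound
  set C := Subgroup.centralizer (((Subgroup.zpowers c).normalCore : Set X)) with hCdef
  have hCnormal : C.Normal := cent_normal' _ hNnormal
  set φ := QuotientGroup.mk' C with hφ
  have hφ1 : ∀ x ∈ C, φ x = 1 := fun x hx => (QuotientGroup.eq_one_iff x).mpr hx
  have hA2 : (φ a) ^ 2 = 1 := by rw [← map_pow]; exact hφ1 _ ha2
  have hAinv : (φ a)⁻¹ = φ a := by rw [inv_eq_iff_mul_eq_one, ← pow_two]; exact hA2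
  have hcomm : φ a * φ b = φ b * φ a := by
    have h1 : φ b * φ a * (φ b)⁻¹ = (φ a)⁻¹ := by
      rw [← map_inv, ← map_inv, ← map_mul, ← map_mul, hrel]
    rw [mul_inv_eq_iff_eq_mul] at h1
    rw [h1, hAinv]
  have hcomm' : Commute (φ a) (φ b) := hcomm
  have hc1 : ∀ k : ℤ, φ (c ^ k) = 1 := by
    intro k
    rw [map_zpow, hφ1 c hcC, one_zpow]
  have hBcase : (φ b) ^ 2 = 1 ∨ (φ b) ^ 2 = φ a := by
    have hb2or : (φ b) ^ 2 = 1 ∨ (φ b) ^ 2 = (φ a) ^ n := by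
      rcases hGtype with ⟨_, hb2, _⟩ | ⟨_, hb2, _⟩
      · left; rw [← map_pow, ← hb2, pow_orderOf_eq_one, map_one]
      · right; rw [← map_pow, hb2, map_pow]
    rcases hb2or with h | h
    · left; exact h
    · rcases Nat.even_or_odd n with ⟨m, hm⟩ | ⟨m, hm⟩
      · left; rw [h, hm, ← two_mul, pow_mul, hA2, one_pow]
      · right; rw [h, hm, pow_add, pow_mul, hA2, one_pow, one_mul, pow_one]
  have hB4 : (φ b) ^ 4 = 1 := by
    rw [show (4:ℕ) = 2 * 2 by norm_num, pow_mul]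
    rcases hBcase with h | h
    · rw [h, one_pow]
    · rw [h, hA2]
  have hBinv : (φ b)⁻¹ = (φ b) ^ 3 := by
    rw [inv_eq_iff_mul_eq_one, ← pow_succ']
    norm_num
    exact hB4
  -- every element of the quotient is (φ a)^i * (φ b)^j
  have hrep : ∀ q : X ⧸ C, ∃ i j : ℕ, q = (φ a) ^ i * (φ b) ^ j := by
    intro q
    obtain ⟨x, rfl⟩ := QuotientGroup.mk'_surjective C q
    obtain ⟨g, hg, k, rfl⟩ := hfact x
    rw [show (QuotientGroup.mk' C) (g * c ^ k) = φ g * φ (c ^ k) from map_mul φ g _,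
      hc1 k, mul_one]
    rw [hGgen] at hg
    induction hg using Subgroup.closure_induction with
    | mem x hx =>
      simp only [Set.mem_insert_iff, Set.mem_singleton_iff] at hx
      rcases hx with rfl | rfl
      · exact ⟨1, 0, by simp⟩
      · exact ⟨0, 1, by simp⟩
    | one => exact ⟨0, 0, by simp⟩
    | mul x y hx hy ihx ihy =>
      obtain ⟨i, j, hij⟩ := ihx
      obtain ⟨i', j', hij'⟩ := ihy
      refine ⟨i + i', j + j', ?_⟩
      rw [map_mul, hij, hij', pow_add, pow_add]
      calc φ a ^ i * φ b ^ j * (φ a ^ i' * φ b ^ j')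
          = φ a ^ i * (φ b ^ j * φ a ^ i') * φ b ^ j' := by group
        _ = φ a ^ i * (φ a ^ i' * φ b ^ j) * φ b ^ j' := by
            rw [(hcomm'.symm.pow_pow j i').eq]
        _ = φ a ^ i * φ a ^ i' * (φ b ^ j * φ b ^ j') := by group
    | inv x hx ihx =>
      obtain ⟨i, j, hij⟩ := ihx
      refine ⟨i, 3 * j, ?_⟩
      have hAi : ((φ a) ^ i)⁻¹ = (φ a) ^ i := by rw [← inv_pow, hAinv]
      have hBj : ((φ b) ^ j)⁻¹ = (φ b) ^ (3 * j) := by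
        rw [← inv_pow, hBinv, ← pow_mul, mul_comm]
      rw [map_inv, hij, mul_inv_rev, hAi, hBj]
      exact ((hcomm'.symm.pow_pow (3 * j) i).eq)
  have hindex : C.index = Nat.card (X ⧸ C) := rfl
  rw [hindex]
  rcases hBcase with hB2 | hB2
  · -- φ b has square 1: reps 1, a, b, ab
    have hsurj : Function.Surjective (fun k : Fin 4 => ![1, φ a, φ b, φ a * φ b] k) := by
      intro q
      obtain ⟨i, j, rfl⟩ := hrep q
      rw [pow_eq_pow_mod i hA2, pow_eq_pow_mod j hB2]
      rcases Nat.mod_two_eq_zero_or_one i with h1 | h1 <;>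
        rcases Nat.mod_two_eq_zero_or_one j with h2 | h2 <;> rw [h1, h2]
      · exact ⟨0, by simp⟩
      · exact ⟨2, by simp⟩
      · exact ⟨1, by simp⟩
      · exact ⟨3, by simp⟩
    calc Nat.card (X ⧸ C) ≤ Nat.card (Fin 4) := Nat.card_le_card_of_surjective _ hsurj
      _ = 4 := by simp
  · -- φ b squares to φ a: everything is a power of φ b
    have hsurj : Function.Surjective (fun k : Fin 4 => (φ b) ^ (k : ℕ)) := by
      intro q
      obtain ⟨i, j, rfl⟩ := hrep q
      have hpow : (φ a) ^ i * (φ b) ^ j = (φ b) ^ (2 * i + j) := by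
        rw [← hB2, ← pow_mul, ← pow_add]
      rw [hpow, pow_eq_pow_mod (2 * i + j) hB4]
      exact ⟨⟨(2 * i + j) % 4, Nat.mod_lt _ (by norm_num)⟩, rfl⟩
    calc Nat.card (X ⧸ C) ≤ Nat.card (Fin 4) := Nat.card_le_card_of_surjective _ hsurj
      _ = 4 := by simp
end

section
/- Let X = G⟨c⟩ with G = ⟨a,b⟩ ∈ {D_{2n}, Q_{4n}}, G ∩ ⟨c⟩ = 1, ⟨c⟩_X = 1, and suppose ⟨a⟩ ⊴ X and ⟨a⟩⟨c⟩ is a subgroup of X. Then G ⊴ X. -/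
/-!
Counting orders, `⟨a⟩⟨c⟩` has index 2 in `X`, hence is normal, so `b c b⁻¹ = α γ` with
`α ∈ ⟨a⟩` and `γ ∈ ⟨c⟩`. As `b` inverts the cyclic group `⟨a⟩`, `b c b⁻¹` and `c` induce the
same automorphism of `⟨a⟩`, so `z = c⁻¹ γ` centralizes `a`. As `b²` is `1` or the involution
`aⁿ` of `⟨a⟩`, it commutes with `c`, and conjugating `b c b⁻¹ = α c z` by `b` gives
`b z b⁻¹ = z⁻¹`. Hence `⟨z⟩` is normalized by `a`, `b`, `c`, so `⟨z⟩ ≤ ⟨c⟩_X = 1` and `γ = c`.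
Then `c b c⁻¹ = α⁻¹ b ∈ G`, so `c` normalizes `G`.
-/

open scoped Pointwise
open Subgroup

namespace Subgroup

variable {X : Type*} [Group X]

theorem card_mul_of_disjoint {H K : Subgroup X} (h : Disjoint H K) :
    Nat.card ((H : Set X) * (K : Set X)) = Nat.card H * Nat.card K := by
  have hrange : Set.range (fun g : H × K => (g.1 : X) * g.2) = (H : Set X) * (K : Set X) := by
    ext x
    simp [Set.mem_mul]
  rw [← Nat.card_prod, ← Nat.card_range_of_injective (mul_injective_of_disjoint h), hrange]

theorem index_eq_two_of_card_eq_two_mul [Finite X] {A G C M : Subgroup X}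
    (hGC : Disjoint G C) (hX : (G : Set X) * (C : Set X) = Set.univ) (hAC : Disjoint A C)
    (hM : (M : Set X) = (A : Set X) * (C : Set X)) (hG : Nat.card G = 2 * Nat.card A) :
    M.index = 2 := by
  have hXcard : Nat.card X = Nat.card G * Nat.card C := by
    rw [← card_mul_of_disjoint hGC, hX, Nat.card_univ]
  have hMcard : Nat.card M = Nat.card A * Nat.card C := by
    rw [← card_mul_of_disjoint hAC, ← hM, SetLike.coe_sort_coe]
  have hcard := M.card_mul_index
  rw [hXcard, hMcard, hG] at hcard
  have hpos : 0 < Nat.card A * Nat.card C := Nat.mul_pos Nat.card_pos Nat.card_pos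
  nlinarith

theorem closure_normal_of_conj_mem [Finite X] {S T : Set X} (hS : closure S = ⊤)
    (h : ∀ s ∈ S, ∀ t ∈ T, s * t * s⁻¹ ∈ closure T) : (closure T).Normal := by
  rw [← normalizer_eq_top_iff, eq_top_iff, ← hS, closure_le]
  intro s hs
  refine mem_normalizer_fintype fun x hx => ?_
  have hmap : (closure T).map (MulAut.conj s).toMonoidHom ≤ closure T := by
    rw [MonoidHom.map_closure, closure_le]
    rintro _ ⟨t, ht, rfl⟩
    exact h s hs t ht
  exact hmap (mem_map_of_mem _ hx)

theorem closure_normal_of_closure_insert_eq_top [Finite X] {c : X} {T : Set X}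
    (hS : closure (insert c T) = ⊤) (h : ∀ t ∈ T, c * t * c⁻¹ ∈ closure T) :
    (closure T).Normal := by
  refine closure_normal_of_conj_mem hS fun s hs t ht => ?_
  rcases hs with rfl | hs
  · exact h t ht
  · exact mul_mem (mul_mem (subset_closure hs) (subset_closure ht)) (inv_mem (subset_closure hs))

theorem closure_insert_eq_top_of_forall_eq_mul_zpow {c : X} {T : Set X}
    (h : ∀ x, ∃ g ∈ closure T, ∃ k : ℤ, x = g * c ^ k) : closure (insert c T) = ⊤ := by
  refine eq_top_iff.mpr fun x _ => ?_
  obtain ⟨g, hg, k, rfl⟩ := h x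
  exact mul_mem (closure_mono (Set.subset_insert c T) hg)
    (zpow_mem (subset_closure (Set.mem_insert c T)) k)

end Subgroup

section

variable {X : Type*} [Group X]

theorem commute_pow_of_conj_mem_zpowers {a x : X} {n : ℕ} (ha : a ^ (2 * n) = 1)
    (hx : x * a * x⁻¹ ∈ zpowers a) : Commute x (a ^ n) := by
  obtain ⟨k, hk⟩ := mem_zpowers_iff.mp hx
  have hconj : x * a ^ n * x⁻¹ = (a ^ n) ^ k := by
    rw [← conj_pow, ← hk, ← zpow_natCast, ← zpow_natCast, ← zpow_mul, ← zpow_mul, mul_comm]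
  have hsq : (a ^ n) ^ (2 : ℤ) = 1 := by rw [zpow_ofNat, ← pow_mul, mul_comm, ha]
  rcases Int.even_or_odd' k with ⟨l, rfl | rfl⟩
  · rw [zpow_mul, hsq, one_zpow, conj_eq_one_iff] at hconj
    rw [hconj]
    exact Commute.one_right x
  · rw [zpow_add, zpow_mul, hsq, one_zpow, one_mul, zpow_one] at hconj
    exact mul_inv_eq_iff_eq_mul.mp hconj

theorem conj_eq_inv_of_mem_zpowers {a b x : X} (hb : b * a * b⁻¹ = a⁻¹) (hx : x ∈ zpowers a) :
    b * x * b⁻¹ = x⁻¹ := by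
  obtain ⟨k, rfl⟩ := mem_zpowers_iff.mp hx
  rw [← conj_zpow, hb, inv_zpow]

theorem commute_inv_mul_of_conj_eq_mul {a b c α γ : X} (hb : b * a * b⁻¹ = a⁻¹)
    (hα : α ∈ zpowers a) (hc : c * a * c⁻¹ ∈ zpowers a) (hγ : γ * a * γ⁻¹ ∈ zpowers a)
    (h : b * c * b⁻¹ = α * γ) : Commute (c⁻¹ * γ) a := by
  have hb' : b⁻¹ * a * b = a⁻¹ := calc
    b⁻¹ * a * b = b⁻¹ * (b * a * b⁻¹)⁻¹ * b := by rw [hb, inv_inv]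
    _ = a⁻¹ := by group
  have hαγ : α * (γ * a * γ⁻¹) * α⁻¹ = γ * a * γ⁻¹ := by
    obtain ⟨k, rfl⟩ := mem_zpowers_iff.mp hα
    obtain ⟨l, hl⟩ := mem_zpowers_iff.mp hγ
    rw [← hl, (Commute.zpow_zpow_self a k l).eq, mul_inv_cancel_right]
  have key : γ * a * γ⁻¹ = c * a * c⁻¹ := calc
    γ * a * γ⁻¹ = (α * γ) * a * (α * γ)⁻¹ := by rw [← hαγ]; group
    _ = b * (c * (b⁻¹ * a * b) * c⁻¹) * b⁻¹ := by rw [← h]; group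
    _ = b * (c * a * c⁻¹)⁻¹ * b⁻¹ := by rw [hb']; group
    _ = c * a * c⁻¹ := by rw [conj_eq_inv_of_mem_zpowers hb (inv_mem hc), inv_inv]
  refine mul_inv_eq_iff_eq_mul.mp ?_
  calc c⁻¹ * γ * a * (c⁻¹ * γ)⁻¹ = c⁻¹ * (γ * a * γ⁻¹) * c := by group
    _ = a := by rw [key]; group

theorem conj_inv_mul_eq_inv {b c α γ : X} (hb2 : Commute (b ^ 2) c) (hα : b * α * b⁻¹ = α⁻¹)
    (h : b * c * b⁻¹ = α * γ) : b * (c⁻¹ * γ) * b⁻¹ = (c⁻¹ * γ)⁻¹ := by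
  have hbγ : b * γ * b⁻¹ = α * c := calc
    b * γ * b⁻¹ = α * (b * α * b⁻¹) * (b * γ * b⁻¹) := by rw [hα]; group
    _ = α * (b * (b * c * b⁻¹) * b⁻¹) := by rw [h]; group
    _ = α * (b ^ 2 * c * (b ^ 2)⁻¹) := by rw [sq]; group
    _ = α * c := by rw [hb2.eq, mul_inv_cancel_right]
  calc b * (c⁻¹ * γ) * b⁻¹ = (b * c * b⁻¹)⁻¹ * (b * γ * b⁻¹) := by group
    _ = (c⁻¹ * γ)⁻¹ := by rw [h, hbγ]; group

theorem eq_of_conj_eq_mul_of_normalCore_eq_bot [Finite X] {a b c α γ : X}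
    (hgen : closure {c, a, b} = ⊤) (hcore : (zpowers c).normalCore = ⊥)
    (hA : (zpowers a).Normal) (hb : b * a * b⁻¹ = a⁻¹) (hb2 : Commute (b ^ 2) c)
    (hα : α ∈ zpowers a) (hγ : γ ∈ zpowers c) (h : b * c * b⁻¹ = α * γ) : γ = c := by
  have hza := commute_inv_mul_of_conj_eq_mul hb hα (hA.conj_mem a (mem_zpowers a) c)
    (hA.conj_mem a (mem_zpowers a) γ) h
  have hzb := conj_inv_mul_eq_inv hb2 (conj_eq_inv_of_mem_zpowers hb hα) h
  have hzC : c⁻¹ * γ ∈ zpowers c := mul_mem (inv_mem (mem_zpowers c)) hγ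
  have hzc : Commute c (c⁻¹ * γ) := by
    obtain ⟨k, hk⟩ := mem_zpowers_iff.mp hzC
    exact hk ▸ Commute.self_zpow c k
  have hnormal : (zpowers (c⁻¹ * γ)).Normal := by
    rw [zpowers_eq_closure]
    refine closure_normal_of_conj_mem hgen ?_
    simp only [Set.mem_insert_iff, Set.mem_singleton_iff, forall_eq_or_imp, forall_eq]
    refine ⟨?_, ?_, ?_⟩
    · rw [hzc.eq, mul_inv_cancel_right]
      exact subset_closure rfl
    · rw [hza.symm.eq, mul_inv_cancel_right]
      exact subset_closure rfl
    · rw [hzb]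
      exact inv_mem (subset_closure rfl)
  have hz1 : c⁻¹ * γ ∈ (zpowers c).normalCore :=
    normal_le_normalCore.mpr (zpowers_le.mpr hzC) (mem_zpowers _)
  rw [hcore, mem_bot, inv_mul_eq_one] at hz1
  exact hz1.symm

end

theorem normal_G_of_normal_zpowers_a_general {X : Type*} [Group X] [Finite X]
    (n : ℕ) (a b c : X) (G : Subgroup X)
    (hGgen : G = Subgroup.closure {a, b})
    (hrel : b * a * b⁻¹ = a⁻¹)
    (hGtype : (orderOf a = n ∧ orderOf b = 2 ∧ Nat.card G = 2 * n) ∨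
      (orderOf a = 2 * n ∧ b ^ 2 = a ^ n ∧ Nat.card G = 4 * n))
    (hint : G ⊓ Subgroup.zpowers c = ⊥)
    (hfact : ∀ x : X, ∃ g ∈ G, ∃ k : ℤ, x = g * c ^ k)
    (hcore : (Subgroup.zpowers c).normalCore = ⊥)
    (hanormal : (Subgroup.zpowers a).Normal)
    (hM : ∃ M : Subgroup X,
      (M : Set X) = (Subgroup.zpowers a : Set X) * (Subgroup.zpowers c : Set X)) :
    G.Normal := by
  obtain ⟨M, hM⟩ := hM
  subst hGgen
  have hAG : zpowers a ≤ closure {a, b} := zpowers_le.mpr (subset_closure (by simp))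
  have hGC : Disjoint (closure {a, b}) (zpowers c) := disjoint_iff.mpr hint
  have hgen := closure_insert_eq_top_of_forall_eq_mul_zpow hfact
  have hGCuniv : (closure {a, b} : Set X) * (zpowers c : Set X) = Set.univ := by
    refine Set.eq_univ_of_forall fun x => ?_
    obtain ⟨g, hg, k, rfl⟩ := hfact x
    exact Set.mul_mem_mul hg (zpow_mem (mem_zpowers c) k)
  have hGcard : Nat.card (closure {a, b}) = 2 * Nat.card (zpowers a) := by
    rcases hGtype with ⟨ha, -, hG⟩ | ⟨ha, -, hG⟩ <;> rw [Nat.card_zpowers] <;> omega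
  have hcM : c ∈ M := by
    simpa [← SetLike.mem_coe, hM] using Set.mul_mem_mul (one_mem (zpowers a)) (mem_zpowers c)
  obtain ⟨α, hα, γ, hγ, hbc : α * γ = b * c * b⁻¹⟩ :
      b * c * b⁻¹ ∈ (zpowers a : Set X) * (zpowers c : Set X) :=
    hM ▸ (normal_of_index_eq_two (index_eq_two_of_card_eq_two_mul hGC hGCuniv
      (hGC.mono_left hAG) hM hGcard)).conj_mem c hcM b
  have hb2 : Commute (b ^ 2) c := by
    rcases hGtype with ⟨-, hb, -⟩ | ⟨ha, hb, -⟩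
    · simp [← hb, pow_orderOf_eq_one]
    · exact hb ▸ (commute_pow_of_conj_mem_zpowers (ha ▸ pow_orderOf_eq_one a)
        (hanormal.conj_mem a (mem_zpowers a) c)).symm
  have hγc := eq_of_conj_eq_mul_of_normalCore_eq_bot hgen hcore hanormal hrel hb2 hα hγ hbc.symm
  have hcb : c * b * c⁻¹ = α⁻¹ * b := calc
    c * b * c⁻¹ = α⁻¹ * ((α * γ) * b * c⁻¹) := by rw [hγc]; group
    _ = α⁻¹ * b := by rw [hbc]; group
  refine closure_normal_of_closure_insert_eq_top hgen ?_
  simp only [Set.mem_insert_iff, Set.mem_singleton_iff, forall_eq_or_imp, forall_eq]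
  exact ⟨hAG (hanormal.conj_mem a (mem_zpowers a) c),
    hcb ▸ mul_mem (inv_mem (hAG hα)) (subset_closure (by simp))⟩

/-- If `X = G⟨c⟩` with `G` dihedral or generalized quaternion, `⟨c⟩` core-free,
`⟨a⟩ ⊴ X` and `⟨a⟩⟨c⟩` a subgroup, then `G ⊴ X`. -/
theorem normal_G_of_normal_zpowers_a {X : Type*} [Group X] [Finite X]
    (n : ℕ) (hn : 2 ≤ n) (a b c : X) (G : Subgroup X)
    (hGgen : G = Subgroup.closure {a, b})
    (hrel : b * a * b⁻¹ = a⁻¹)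
    (hGtype : (orderOf a = n ∧ orderOf b = 2 ∧ Nat.card G = 2 * n) ∨
      (orderOf a = 2 * n ∧ b ^ 2 = a ^ n ∧ Nat.card G = 4 * n))
    (hint : G ⊓ Subgroup.zpowers c = ⊥)
    (hfact : ∀ x : X, ∃ g ∈ G, ∃ k : ℤ, x = g * c ^ k)
    (hcore : (Subgroup.zpowers c).normalCore = ⊥)
    (hanormal : (Subgroup.zpowers a).Normal)
    (hM : ∃ M : Subgroup X,
      (M : Set X) = (Subgroup.zpowers a : Set X) * (Subgroup.zpowers c : Set X)) :
    G.Normal :=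
  normal_G_of_normal_zpowers_a_general n a b c G hGgen hrel hGtype hint hfact hcore hanormal hM
end
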